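/- arXiv:0901.1473 — 6 statements merged into one kernel-verified Lean document; each statement's English description precedes it below -/
import Mathlib

section
/- For every probability distribution Q on a finite alphabet 𝒳, every sequence y ∈ 𝒴^n over a finite alphabet 𝒴, and every t ≥ 0, if x ∈ 𝒳^n is drawn i.i.d. according to Q, then the probability that the empirical mutual information satisfies Î(x;y) ≥ t is at most exp(−n(t − δ_n)), where δ_n = |𝒳|·|𝒴|·log(n+1)/n. -/
open Finset

/-- Joint empirical distribution of two sequences over an index set `A`. -/
noncomputable def empDistOn {n : ℕ} {𝒳 𝒴 : Type*} [DecidableEq 𝒳] [DecidableEq 𝒴]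
    (A : Finset (Fin n)) (x : Fin n → 𝒳) (y : Fin n → 𝒴) (a : 𝒳) (b : 𝒴) : ℝ :=
  ((A.filter fun i => x i = a ∧ y i = b).card : ℝ) / (A.card : ℝ)

/-- Mutual information of a joint distribution `p` on a finite product alphabet
(natural-log base). -/
noncomputable def miOf {𝒳 𝒴 : Type*} [Fintype 𝒳] [Fintype 𝒴] (p : 𝒳 → 𝒴 → ℝ) : ℝ :=
  ∑ a, ∑ b, p a b * Real.log (p a b / ((∑ b', p a b') * (∑ a', p a' b)))

/-- Empirical mutual information `Î(x;y)` of two sequences. -/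
noncomputable def empMI {n : ℕ} {𝒳 𝒴 : Type*} [Fintype 𝒳] [Fintype 𝒴]
    [DecidableEq 𝒳] [DecidableEq 𝒴] (x : Fin n → 𝒳) (y : Fin n → 𝒴) : ℝ :=
  miOf (empDistOn Finset.univ x y)

/-- Probability of a set of sequences under the i.i.d. product distribution `Q^n`. -/
noncomputable def prodProb {n : ℕ} {𝒳 : Type*} [Fintype 𝒳] (Q : 𝒳 → ℝ)
    (S : Set (Fin n → 𝒳)) : ℝ :=
  ∑ x : Fin n → 𝒳, S.indicator (fun z => ∏ i, Q (z i)) x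

/-!
Method of types. The empirical distribution `P` of `x` maximises the likelihood of `x`, so
`Qⁿ(x) ≤ Pⁿ(x)`, and `Pⁿ(x) = exp (-n Î(x;y)) · Vⁿ(x | y)` where `V` is the empirical conditional
distribution of `x` given `y`. The kernel `V` depends on `x` only through the joint counts, which
take at most `(n+1)^(|𝒳|·|𝒴|)` values, and every `Vⁿ(· | y)` has total mass at most `1`; summing
over the `x` with `Î(x;y) ≥ t` gives the bound.
-/

open Real

section Likelihood

variable {ι α : Type*} [Fintype ι] [Fintype α] [DecidableEq α]

lemma pow_le_div_pow_mul_exp {q N : ℝ} (hq : 0 ≤ q) (hN : 0 < N) (k : ℕ) :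
    q ^ k ≤ (k / N) ^ k * exp (N * q - k) := by
  rcases Nat.eq_zero_or_pos k with rfl | hk
  · simpa using one_le_exp (by positivity)
  have hk0 : (0 : ℝ) < k := by exact_mod_cast hk
  set z := N * q / k
  have hkz : (k : ℝ) * z = N * q := by
    simp only [z]
    field_simp
  -- `z ≤ exp (z - 1)`, raised to the power `k`
  have hz : z ≤ exp (z - 1) := by linarith [add_one_le_exp (z - 1)]
  have hexp : exp (z - 1) ^ k = exp (N * q - k) := by
    rw [← exp_nat_mul, mul_sub, hkz, mul_one]
  calc q ^ k = (k / N) ^ k * z ^ k := by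
        rw [← mul_pow]
        congr 1
        field_simp
        linarith
    _ ≤ (k / N) ^ k * exp (N * q - k) := by
        rw [← hexp]
        gcongr

lemma prod_apply_eq_prod_pow_card {M : Type*} [CommMonoid M] (f : α → M) (x : ι → α) :
    ∏ i, f (x i) = ∏ a, f a ^ #{i | x i = a} := by
  rw [← prod_fiberwise univ x fun i => f (x i)]
  refine prod_congr rfl fun a _ => ?_
  rw [prod_congr rfl fun i hi => by rw [(mem_filter.1 hi).2], prod_const]

lemma prod_le_prod_card_filter_div (Q : α → ℝ) (hQ0 : ∀ a, 0 ≤ Q a) (hQ1 : ∑ a, Q a ≤ 1)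
    (x : ι → α) :
    ∏ i, Q (x i) ≤ ∏ i, (#{j | x j = x i} : ℝ) / (Fintype.card ι : ℝ) := by
  rcases isEmpty_or_nonempty ι with _ | _
  · simp
  set N : ℝ := (Fintype.card ι : ℝ)
  have hN : 0 < N := by simp [N, Fintype.card_pos]
  rw [prod_apply_eq_prod_pow_card Q, prod_apply_eq_prod_pow_card fun a => (#{j | x j = a} : ℝ) / N]
  have hexp : exp (∑ a, (N * Q a - #{i | x i = a})) ≤ 1 := by
    rw [exp_le_one_iff, sum_sub_distrib, ← mul_sum, ← Nat.cast_sum,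
      ← card_eq_sum_card_fiberwise fun i _ => mem_univ (x i), card_univ]
    nlinarith
  calc ∏ a, Q a ^ #{i | x i = a}
      ≤ ∏ a, ((#{i | x i = a} : ℝ) / N) ^ #{i | x i = a} * exp (N * Q a - #{i | x i = a}) :=
        prod_le_prod (fun a _ => pow_nonneg (hQ0 a) _)
          fun a _ => pow_le_div_pow_mul_exp (hQ0 a) hN _
    _ = (∏ a, ((#{i | x i = a} : ℝ) / N) ^ #{i | x i = a}) *
          exp (∑ a, (N * Q a - #{i | x i = a})) := by
        rw [prod_mul_distrib, exp_sum]
    _ ≤ ∏ a, ((#{i | x i = a} : ℝ) / N) ^ #{i | x i = a} :=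
        mul_le_of_le_one_right (prod_nonneg fun a _ => by positivity) hexp

end Likelihood

section Kernel

variable {ι 𝒳 𝒴 : Type*} [Fintype 𝒳]

/-- `p(a, b) / p(b)`; a row `b` of mass `0` is the zero row, so rows sum to at most `1`. -/
noncomputable def condDist (p : 𝒳 → 𝒴 → ℝ) (b : 𝒴) (a : 𝒳) : ℝ :=
  p a b / ∑ a', p a' b

lemma condDist_nonneg {p : 𝒳 → 𝒴 → ℝ} (hp : ∀ a b, 0 ≤ p a b) (b : 𝒴) (a : 𝒳) :
    0 ≤ condDist p b a :=
  div_nonneg (hp a b) (sum_nonneg fun a' _ => hp a' b)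

lemma sum_condDist_le_one (p : 𝒳 → 𝒴 → ℝ) (b : 𝒴) :
    ∑ a, condDist p b a ≤ 1 := by
  simp only [condDist]
  rw [← sum_div]
  exact div_self_le_one _

lemma sum_prod_le_one [Fintype ι] [DecidableEq ι] (W : 𝒴 → 𝒳 → ℝ) (hW0 : ∀ b a, 0 ≤ W b a)
    (hW1 : ∀ b, ∑ a, W b a ≤ 1) (y : ι → 𝒴) :
    ∑ x : ι → 𝒳, ∏ i, W (y i) (x i) ≤ 1 := by
  rw [← Fintype.prod_sum fun i a => W (y i) a]
  exact prod_le_one (fun i _ => sum_nonneg fun a _ => hW0 _ a) fun i _ => hW1 (y i)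

noncomputable def typeCondDist {n : ℕ} (v : 𝒳 → 𝒴 → Fin (n + 1)) : 𝒴 → 𝒳 → ℝ :=
  condDist fun a b => ((v a b : ℕ) : ℝ) / n

lemma typeCondDist_nonneg {n : ℕ} (v : 𝒳 → 𝒴 → Fin (n + 1)) (b : 𝒴) (a : 𝒳) :
    0 ≤ typeCondDist v b a :=
  condDist_nonneg (fun a b => by positivity) b a

end Kernel

section EmpiricalDistribution

variable {n : ℕ} {𝒳 𝒴 : Type*} [DecidableEq 𝒳] [DecidableEq 𝒴]
  (x : Fin n → 𝒳) (y : Fin n → 𝒴)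

/-- Valued in `Fin (n + 1)` so that the joint types form a finite type of size
`(n + 1) ^ (|𝒳| * |𝒴|)`. -/
def jointCount (a : 𝒳) (b : 𝒴) : Fin (n + 1) :=
  ⟨#{i | x i = a ∧ y i = b}, Nat.lt_succ_of_le ((card_le_univ _).trans_eq (Fintype.card_fin n))⟩

lemma condDist_empDistOn_univ [Fintype 𝒳] :
    condDist (empDistOn univ x y) = typeCondDist (jointCount x y) := by
  unfold typeCondDist
  congr
  funext a b
  simp [empDistOn, jointCount]

lemma empDistOn_univ_nonneg (a : 𝒳) (b : 𝒴) : 0 ≤ empDistOn univ x y a b := by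
  unfold empDistOn
  positivity

lemma empDistOn_univ_apply_pos (i : Fin n) : 0 < empDistOn univ x y (x i) (y i) := by
  unfold empDistOn
  have hi : (univ.filter fun j => x j = x i ∧ y j = y i).Nonempty := ⟨i, by simp⟩
  have hn : (univ : Finset (Fin n)).Nonempty := ⟨i, mem_univ i⟩
  exact div_pos (by exact_mod_cast hi.card_pos) (by exact_mod_cast hn.card_pos)

lemma sum_empDistOn_univ [Fintype 𝒴] (a : 𝒳) :
    ∑ b, empDistOn univ x y a b = (#{i | x i = a} : ℝ) / n := by
  simp only [empDistOn, card_univ, Fintype.card_fin]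
  rw [← sum_div, ← Nat.cast_sum,
    card_eq_sum_card_fiberwise (f := y) (t := univ) fun i _ => mem_univ (y i)]
  simp only [filter_filter]

lemma sum_apply_eq_mul_sum_empDistOn [Fintype 𝒳] [Fintype 𝒴] (hn : 0 < n) (g : 𝒳 → 𝒴 → ℝ) :
    ∑ i, g (x i) (y i) = n * ∑ a, ∑ b, empDistOn univ x y a b * g a b := by
  rw [← sum_fiberwise univ (fun i => (x i, y i)) fun i => g (x i) (y i), Fintype.sum_prod_type,
    mul_sum]
  refine sum_congr rfl fun a _ => ?_
  rw [mul_sum]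
  refine sum_congr rfl fun b _ => ?_
  have hfib : ∀ i ∈ ({i | (x i, y i) = (a, b)} : Finset (Fin n)), g (x i) (y i) = g a b := by
    intro i hi
    simp only [mem_filter, Prod.mk.injEq] at hi
    rw [hi.2.1, hi.2.2]
  rw [sum_congr rfl hfib, sum_const, nsmul_eq_mul, empDistOn, card_univ, Fintype.card_fin,
    ← mul_assoc, mul_div_cancel₀ _ (Nat.cast_pos.2 hn).ne']
  simp only [Prod.mk.injEq]

lemma exp_neg_mul_empMI_mul_prod_condDist [Fintype 𝒳] [Fintype 𝒴] (hn : 0 < n) :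
    exp (-n * empMI x y) * ∏ i, condDist (empDistOn univ x y) (y i) (x i) =
      ∏ i, ∑ b, empDistOn univ x y (x i) b := by
  set p := empDistOn univ x y
  have hlog : n * empMI x y =
      ∑ i, log (p (x i) (y i) / ((∑ b, p (x i) b) * ∑ a, p a (y i))) :=
    (sum_apply_eq_mul_sum_empDistOn x y hn
      fun a b => log (p a b / ((∑ b', p a b') * ∑ a', p a' b))).symm
  rw [neg_mul, hlog, exp_neg, exp_sum, ← prod_inv_distrib, ← prod_mul_distrib]
  refine prod_congr rfl fun i _ => ?_
  have hp : 0 < p (x i) (y i) := empDistOn_univ_apply_pos x y i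
  have hP : 0 < ∑ b, p (x i) b :=
    hp.trans_le (single_le_sum (fun b _ => empDistOn_univ_nonneg x y _ b) (mem_univ (y i)))
  have hS : 0 < ∑ a, p a (y i) :=
    hp.trans_le (single_le_sum (fun a _ => empDistOn_univ_nonneg x y a _) (mem_univ (x i)))
  rw [exp_log (div_pos hp (mul_pos hP hS)), condDist]
  field_simp

lemma prod_le_exp_neg_mul_empMI_mul_prod_condDist [Fintype 𝒳] [Fintype 𝒴] (hn : 0 < n) (Q : 𝒳 → ℝ)
    (hQ0 : ∀ a, 0 ≤ Q a) (hQ1 : ∑ a, Q a ≤ 1) :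
    ∏ i, Q (x i) ≤ exp (-n * empMI x y) * ∏ i, condDist (empDistOn univ x y) (y i) (x i) := by
  rw [exp_neg_mul_empMI_mul_prod_condDist x y hn]
  simp_rw [sum_empDistOn_univ]
  simpa using prod_le_prod_card_filter_div Q hQ0 hQ1 x

lemma prod_le_exp_neg_mul_sum_prod_typeCondDist [Fintype 𝒳] [Fintype 𝒴] (hn : 0 < n)
    (Q : 𝒳 → ℝ) (hQ0 : ∀ a, 0 ≤ Q a) (hQ1 : ∑ a, Q a ≤ 1) {t : ℝ} (ht : t ≤ empMI x y) :
    ∏ i, Q (x i) ≤ exp (-n * t) * ∑ v : 𝒳 → 𝒴 → Fin (n + 1), ∏ i, typeCondDist v (y i) (x i) := by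
  have hexp : exp (-n * empMI x y) ≤ exp (-n * t) :=
    exp_le_exp.2 (mul_le_mul_of_nonpos_left ht (neg_nonpos.2 n.cast_nonneg))
  have hterm : ∏ i, condDist (empDistOn univ x y) (y i) (x i) ≤
      ∑ v : 𝒳 → 𝒴 → Fin (n + 1), ∏ i, typeCondDist v (y i) (x i) := by
    rw [condDist_empDistOn_univ]
    exact single_le_sum (f := fun v => ∏ i, typeCondDist v (y i) (x i))
      (fun v _ => prod_nonneg fun i _ => typeCondDist_nonneg v _ _) (mem_univ (jointCount x y))
  exact (prod_le_exp_neg_mul_empMI_mul_prod_condDist x y hn Q hQ0 hQ1).trans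
    (mul_le_mul hexp hterm
      (prod_nonneg fun i _ => condDist_nonneg (empDistOn_univ_nonneg x y) _ _) (exp_pos _).le)

lemma card_jointTypes [Fintype 𝒳] [Fintype 𝒴] :
    (Fintype.card (𝒳 → 𝒴 → Fin (n + 1)) : ℝ) =
      exp (Fintype.card 𝒳 * Fintype.card 𝒴 * log (n + 1)) := by
  rw [← Nat.cast_mul, exp_nat_mul, exp_log (by positivity)]
  simp [← pow_mul, mul_comm]

end EmpiricalDistribution

theorem statement0_general {𝒳 𝒴 : Type*} [Fintype 𝒳] [Fintype 𝒴] [DecidableEq 𝒳] [DecidableEq 𝒴]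
    {n : ℕ} (hn : 0 < n) (Q : 𝒳 → ℝ) (hQ0 : ∀ a, 0 ≤ Q a) (hQ1 : ∑ a, Q a = 1)
    (y : Fin n → 𝒴) (t : ℝ) :
    prodProb Q {x : Fin n → 𝒳 | t ≤ empMI x y} ≤
      Real.exp (-(n : ℝ) * (t - (Fintype.card 𝒳 : ℝ) * (Fintype.card 𝒴 : ℝ) *
        Real.log ((n : ℝ) + 1) / (n : ℝ))) := by
  have hnonneg : ∀ x : Fin n → 𝒳,
      0 ≤ exp (-n * t) * ∑ v : 𝒳 → 𝒴 → Fin (n + 1), ∏ i, typeCondDist v (y i) (x i) :=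
    fun x => mul_nonneg (exp_pos _).le
      (sum_nonneg fun v _ => prod_nonneg fun i _ => typeCondDist_nonneg v _ _)
  calc prodProb Q {x : Fin n → 𝒳 | t ≤ empMI x y}
      ≤ ∑ x : Fin n → 𝒳,
          exp (-n * t) * ∑ v : 𝒳 → 𝒴 → Fin (n + 1), ∏ i, typeCondDist v (y i) (x i) :=
        sum_le_sum fun x _ => Set.indicator_le'
          (fun x hx => prod_le_exp_neg_mul_sum_prod_typeCondDist x y hn Q hQ0 hQ1.le hx)
          (fun x _ => hnonneg x) x
    _ = exp (-n * t) * ∑ v, ∑ x : Fin n → 𝒳, ∏ i, typeCondDist v (y i) (x i) := by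
        rw [← mul_sum, sum_comm]
    _ ≤ exp (-n * t) * ∑ _v : 𝒳 → 𝒴 → Fin (n + 1), 1 := by
        gcongr with v
        exact sum_prod_le_one _ (typeCondDist_nonneg v) (sum_condDist_le_one _) y
    _ = _ := by
        rw [sum_const, card_univ, nsmul_one, card_jointTypes, ← exp_add]
        congr 1
        field_simp
        ring

theorem statement0 {𝒳 𝒴 : Type*} [Fintype 𝒳] [Fintype 𝒴] [DecidableEq 𝒳] [DecidableEq 𝒴]
    {n : ℕ} (hn : 0 < n) (Q : 𝒳 → ℝ) (hQ0 : ∀ a, 0 ≤ Q a) (hQ1 : ∑ a, Q a = 1)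
    (y : Fin n → 𝒴) (t : ℝ) (ht : 0 ≤ t) :
    prodProb Q {x : Fin n → 𝒳 | t ≤ empMI x y} ≤
      Real.exp (-(n : ℝ) * (t - (Fintype.card 𝒳 : ℝ) * (Fintype.card 𝒴 : ℝ) *
        Real.log ((n : ℝ) + 1) / (n : ℝ))) :=
  statement0_general hn Q hQ0 hQ1 y t
end

section
/- Let {A_i}_{i=1}^p be a partition of the index set {1,…,n} into disjoint nonempty subsets, let 𝒳, 𝒴 be finite alphabets, let Q be a probability distribution on 𝒳, and let x ∈ 𝒳^n have entries drawn i.i.d. according to Q. Then for every Δ > 0 there exists a subset J_Δ ⊆ 𝒳^n such that: (i) for every x ∉ J_Δ and every y ∈ 𝒴^n, Σ_{i=1}^p (|A_i|/n)·Î(x_{A_i}; y_{A_i}) ≥ Î(x;y) − Δ, where x_A, y_A denote the sub-sequences of x, y restricted to the index set A; and (ii) Q^n(J_Δ) ≤ exp(−n(Δ − δ̃_n)), where δ̃_n = p·|𝒳|·log(n+1)/n. -/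
open Finset

/-- Empirical mutual information `Î(x_A; y_A)` of the sub-sequences of `x,y` on `A`. -/
noncomputable def empMIOn {n : ℕ} {𝒳 𝒴 : Type*} [Fintype 𝒳] [Fintype 𝒴]
    [DecidableEq 𝒳] [DecidableEq 𝒴] (A : Finset (Fin n)) (x : Fin n → 𝒳)
    (y : Fin n → 𝒴) : ℝ :=
  miOf (empDistOn A x y)

/-!
Write `λ_j = |A_j| / n`. The joint type of `(x, y)` is the mixture `∑ λ_j P_j` of the joint types
`P_j` on the blocks, so by Gibbs' inequality and the joint convexity of relative entropy
(log-sum inequality)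
`I(∑ λ_j P_j) ≤ D(∑ λ_j P_j ‖ Q ⊗ ∑ λ_j P_{j,Y}) ≤ ∑ λ_j D(P_j ‖ Q ⊗ P_{j,Y})
  = ∑ λ_j (I(P_j) + D(P_{j,X} ‖ Q))`.
Hence (i) holds outside `J_Δ`, the sequences containing a `Q`-null letter or with
`∑ λ_j D(P_{j,X} ‖ Q) > Δ`. On `J_Δ`, `Q^n(x) ≤ e^{-nΔ} ∏_i P̂_{x_{A(i)}}(x_i)`, the right-hand
product being a maximum-likelihood probability; these sum to at most `1` over each class of
sequences with the same block types, and there are at most `(n + 1)^{p |𝒳|}` such classes.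
-/

noncomputable def relEntropy {α : Type*} [Fintype α] (P S : α → ℝ) : ℝ :=
  ∑ a, P a * Real.log (P a / S a)

lemma sub_le_mul_log_div {a b : ℝ} (ha : 0 ≤ a) (hb : 0 ≤ b) (hab : 0 < a → 0 < b) :
    a - b ≤ a * Real.log (a / b) := by
  rcases ha.eq_or_lt with rfl | ha
  · simpa using hb
  have hlog := mul_le_mul_of_nonneg_left (Real.log_le_sub_one_of_pos (div_pos (hab ha) ha)) ha.le
  rw [mul_sub, mul_div_cancel₀ _ ha.ne', mul_one] at hlog
  rw [← inv_div, Real.log_inv]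
  linarith

lemma exists_pos_of_sum_pos {ι M : Type*} [AddCommMonoid M] [LinearOrder M] [AddLeftMono M]
    {s : Finset ι} {f : ι → M} (h : 0 < ∑ i ∈ s, f i) :
    ∃ i ∈ s, 0 < f i :=
  exists_lt_of_sum_lt (f := 0) (by simpa using h)

section RelEntropy

variable {α : Type*} [Fintype α] {P S : α → ℝ}

lemma sum_sub_sum_le_relEntropy (hP : ∀ a, 0 ≤ P a) (hS : ∀ a, 0 ≤ S a)
    (hPS : ∀ a, 0 < P a → 0 < S a) : ∑ a, P a - ∑ a, S a ≤ relEntropy P S := by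
  rw [← sum_sub_distrib]
  exact sum_le_sum fun a _ => sub_le_mul_log_div (hP a) (hS a) (hPS a)

lemma relEntropy_const_mul_right (hP : ∀ a, 0 ≤ P a) (hPS : ∀ a, 0 < P a → 0 < S a)
    {c : ℝ} (hc : 0 < c) :
    relEntropy P (fun a => c * S a) = relEntropy P S - (∑ a, P a) * Real.log c := by
  rw [relEntropy, relEntropy, sum_mul, ← sum_sub_distrib]
  refine sum_congr rfl fun a _ => ?_
  rcases (hP a).eq_or_lt with h | h
  · simp [← h]
  rw [mul_comm c, ← div_div, Real.log_div (div_pos h (hPS a h)).ne' hc.ne', mul_sub]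

theorem sum_mul_log_div_sum_le_relEntropy (hP : ∀ a, 0 ≤ P a) (hS : ∀ a, 0 ≤ S a)
    (hPS : ∀ a, 0 < P a → 0 < S a) :
    (∑ a, P a) * Real.log ((∑ a, P a) / ∑ a, S a) ≤ relEntropy P S := by
  set A := ∑ a, P a
  set B := ∑ a, S a
  rcases (sum_nonneg fun a _ => hP a : 0 ≤ A).eq_or_lt with hA | hA
  · have hP0 : ∀ a, P a = 0 := fun a =>
      (sum_eq_zero_iff_of_nonneg fun a _ => hP a).1 hA.symm a (mem_univ a)
    rw [show A = 0 from hA.symm]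
    simp [relEntropy, hP0]
  obtain ⟨i, -, hi⟩ := exists_pos_of_sum_pos hA
  have hB : 0 < B := (hPS i hi).trans_le (single_le_sum (fun a _ => hS a) (mem_univ i))
  -- Gibbs' inequality against `S` rescaled to the mass of `P`.
  have hgibbs := sum_sub_sum_le_relEntropy hP (S := fun a => A / B * S a)
    (fun a => mul_nonneg (div_pos hA hB).le (hS a))
    (fun a ha => mul_pos (div_pos hA hB) (hPS a ha))
  rw [← mul_sum, div_mul_cancel₀ _ hB.ne', relEntropy_const_mul_right hP hPS (div_pos hA hB)]
    at hgibbs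
  linarith

theorem relEntropy_sum_le {ι : Type*} [Fintype ι] (w : ι → ℝ) (P S : ι → α → ℝ)
    (hw : ∀ j, 0 ≤ w j) (hP : ∀ j a, 0 ≤ P j a) (hS : ∀ j a, 0 ≤ S j a)
    (hPS : ∀ j a, 0 < P j a → 0 < S j a) :
    relEntropy (fun a => ∑ j, w j * P j a) (fun a => ∑ j, w j * S j a) ≤
      ∑ j, w j * relEntropy (P j) (S j) := by
  have hterm : ∀ j a, w j * P j a * Real.log (w j * P j a / (w j * S j a)) =
      w j * (P j a * Real.log (P j a / S j a)) := by
    intro j a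
    rcases (hw j).eq_or_lt with h | h
    · simp [← h]
    rw [mul_div_mul_left _ _ h.ne', mul_assoc]
  calc relEntropy (fun a => ∑ j, w j * P j a) (fun a => ∑ j, w j * S j a)
      ≤ ∑ a, ∑ j, w j * P j a * Real.log (w j * P j a / (w j * S j a)) :=
        sum_le_sum fun a _ => sum_mul_log_div_sum_le_relEntropy
          (fun j => mul_nonneg (hw j) (hP j a)) (fun j => mul_nonneg (hw j) (hS j a))
          fun j h => mul_pos (pos_of_mul_pos_left h (hP j a))
            (hPS j a (pos_of_mul_pos_right h (hw j)))
    _ = ∑ j, w j * relEntropy (P j) (S j) := by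
      simp only [hterm, relEntropy, mul_sum]
      exact sum_comm

end RelEntropy

section MutualInformation

variable {𝒳 𝒴 : Type*} [Fintype 𝒳] [Fintype 𝒴]

theorem miOf_add_relEntropy_eq (P : 𝒳 → 𝒴 → ℝ) (Q : 𝒳 → ℝ) (hP : ∀ a b, 0 ≤ P a b)
    (hQ : ∀ a b, 0 < P a b → 0 < Q a) :
    miOf P + relEntropy (fun a => ∑ b, P a b) Q =
      relEntropy (Function.uncurry P) (fun z => Q z.1 * ∑ a, P a z.2) := by
  simp only [miOf, relEntropy, Fintype.sum_prod_type, Function.uncurry_apply_pair]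
  rw [← sum_add_distrib]
  refine sum_congr rfl fun a _ => ?_
  rw [sum_mul, ← sum_add_distrib]
  refine sum_congr rfl fun b _ => ?_
  rcases (hP a b).eq_or_lt with h | h
  · simp [← h]
  have hX : 0 < ∑ b', P a b' := h.trans_le (single_le_sum (fun b' _ => hP a b') (mem_univ b))
  have hY : 0 < ∑ a', P a' b := h.trans_le (single_le_sum (fun a' _ => hP a' b) (mem_univ a))
  have hQa := hQ a b h
  rw [← mul_add, ← Real.log_mul (div_pos h (mul_pos hX hY)).ne' (div_pos hX hQa).ne']
  congr 2
  field_simp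

theorem miOf_sum_le {ι : Type*} [Fintype ι] (w : ι → ℝ) (P : ι → 𝒳 → 𝒴 → ℝ) (Q : 𝒳 → ℝ)
    (hw : ∀ j, 0 ≤ w j) (hP : ∀ j a b, 0 ≤ P j a b) (hQ0 : ∀ a, 0 ≤ Q a)
    (hQ : ∀ j a b, 0 < P j a b → 0 < Q a)
    (hmass : ∑ a, Q a ≤ ∑ a, ∑ b, ∑ j, w j * P j a b) :
    miOf (fun a b => ∑ j, w j * P j a b) ≤
      ∑ j, w j * (miOf (P j) + relEntropy (fun a => ∑ b, P j a b) Q) := by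
  set M : 𝒳 → 𝒴 → ℝ := fun a b => ∑ j, w j * P j a b with hM_def
  have hM : ∀ a b, 0 ≤ M a b := fun a b => sum_nonneg fun j _ => mul_nonneg (hw j) (hP j a b)
  have hMQ : ∀ a b, 0 < M a b → 0 < Q a := fun a b h => by
    obtain ⟨j, -, hj⟩ := exists_pos_of_sum_pos h
    exact hQ j a b (pos_of_mul_pos_right hj (hw j))
  have hgibbs : 0 ≤ relEntropy (fun a => ∑ b, M a b) Q := by
    have := sum_sub_sum_le_relEntropy (P := fun a => ∑ b, M a b)
      (fun a => sum_nonneg fun b _ => hM a b) hQ0 fun a h => by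
      obtain ⟨b, -, hb⟩ := exists_pos_of_sum_pos h
      exact hMQ a b hb
    linarith
  have hmix : (fun z : 𝒳 × 𝒴 => Q z.1 * ∑ a, M a z.2) =
      fun z => ∑ j, w j * (Q z.1 * ∑ a, P j a z.2) := by
    funext z
    simp only [hM_def, mul_sum]
    rw [sum_comm]
    exact sum_congr rfl fun j _ => sum_congr rfl fun a _ => by ring
  calc miOf M ≤ miOf M + relEntropy (fun a => ∑ b, M a b) Q := le_add_of_nonneg_right hgibbs
    _ = relEntropy (Function.uncurry M) (fun z => Q z.1 * ∑ a, M a z.2) :=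
      miOf_add_relEntropy_eq M Q hM hMQ
    _ ≤ ∑ j, w j * relEntropy (Function.uncurry (P j)) (fun z => Q z.1 * ∑ a, P j a z.2) := by
      rw [hmix]
      exact relEntropy_sum_le w (fun j => Function.uncurry (P j)) _ hw
        (fun j z => hP j z.1 z.2)
        (fun j z => mul_nonneg (hQ0 z.1) (sum_nonneg fun a _ => hP j a z.2))
        fun j z h => mul_pos (hQ j z.1 z.2 h)
          (h.trans_le (single_le_sum (fun a _ => hP j a z.2) (mem_univ z.1)))
    _ = ∑ j, w j * (miOf (P j) + relEntropy (fun a => ∑ b, P j a b) Q) := by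
      simp only [miOf_add_relEntropy_eq _ Q (hP _) (hQ _)]

end MutualInformation

/-- The type (empirical distribution) of the sub-sequence `x_A`. -/
noncomputable def typeOn {n : ℕ} {𝒳 : Type*} [DecidableEq 𝒳] (A : Finset (Fin n))
    (x : Fin n → 𝒳) (a : 𝒳) : ℝ :=
  (#{i ∈ A | x i = a} : ℝ) / #A

lemma card_mul_card_filter_div_card {ι : Type*} (A : Finset ι) (p : ι → Prop) [DecidablePred p] :
    (#A : ℝ) * (#{i ∈ A | p i} / #A) = #{i ∈ A | p i} := by
  rcases A.eq_empty_or_nonempty with rfl | hA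
  · simp
  · exact mul_div_cancel₀ _ (by positivity)

lemma exists_eq_filter_of_partition {ι κ : Type*} [Fintype ι] [DecidableEq κ]
    (A : κ → Finset ι) (hdisj : ∀ i j, i ≠ j → Disjoint (A i) (A j))
    (hcover : ∀ k, ∃ i, k ∈ A i) :
    ∃ s : ι → κ, A = fun j => ({k | s k = j} : Finset ι) := by
  choose s hs using hcover
  refine ⟨s, funext fun j => ext fun k => ?_⟩
  rw [mem_filter, and_iff_right (mem_univ k)]
  refine ⟨fun hk => ?_, fun h => h ▸ hs k⟩
  by_contra hne
  exact disjoint_left.1 (hdisj _ _ hne) (hs k) hk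

section Empirical

variable {n : ℕ} {𝒳 𝒴 : Type*} [DecidableEq 𝒳] [DecidableEq 𝒴]

lemma typeOn_nonneg (A : Finset (Fin n)) (x : Fin n → 𝒳) (a : 𝒳) : 0 ≤ typeOn A x a := by
  unfold typeOn
  positivity

lemma sum_typeOn [Fintype 𝒳] {A : Finset (Fin n)} (hA : A.Nonempty) (x : Fin n → 𝒳) :
    ∑ a, typeOn A x a = 1 := by
  simp only [typeOn, ← sum_div, ← Nat.cast_sum,
    ← card_eq_sum_card_fiberwise fun i _ => mem_coe.2 (mem_univ (x i))]
  exact div_self (by positivity)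

lemma sum_typeOn_le_one [Fintype 𝒳] (A : Finset (Fin n)) (x : Fin n → 𝒳) :
    ∑ a, typeOn A x a ≤ 1 := by
  rcases A.eq_empty_or_nonempty with rfl | hA
  · simp [typeOn]
  · exact (sum_typeOn hA x).le

lemma sum_empDistOn [Fintype 𝒴] (A : Finset (Fin n)) (x : Fin n → 𝒳) (y : Fin n → 𝒴) (a : 𝒳) :
    ∑ b, empDistOn A x y a b = typeOn A x a := by
  simp only [empDistOn, typeOn, ← sum_div, ← Nat.cast_sum]
  rw [card_eq_sum_card_fiberwise (s := {i ∈ A | x i = a}) (f := y) (t := univ)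
    fun i _ => mem_coe.2 (mem_univ (y i))]
  simp only [filter_filter]

lemma card_mul_sum_typeOn_mul [Fintype 𝒳] (A : Finset (Fin n)) (x : Fin n → 𝒳) (f : 𝒳 → ℝ) :
    (#A : ℝ) * ∑ a, typeOn A x a * f a = ∑ i ∈ A, f (x i) := by
  rw [← sum_fiberwise A x, mul_sum]
  refine sum_congr rfl fun a _ => ?_
  rw [sum_congr rfl fun i hi => by rw [(mem_filter.1 hi).2], sum_const, nsmul_eq_mul, typeOn,
    ← mul_assoc, card_mul_card_filter_div_card]

lemma sum_card_div_mul_empDistOn {κ : Type*} [Fintype κ] [DecidableEq κ] (s : Fin n → κ)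
    (x : Fin n → 𝒳) (y : Fin n → 𝒴) (a : 𝒳) (b : 𝒴) :
    ∑ j, (#{k | s k = j} : ℝ) / n * empDistOn {k | s k = j} x y a b =
      empDistOn univ x y a b := by
  simp only [empDistOn, div_mul_eq_mul_div, card_mul_card_filter_div_card, ← sum_div,
    ← Nat.cast_sum, card_fin]
  congr 2
  simp only [filter_comm (fun k => s k = _), sum_card_fiberwise_eq_card_filter, mem_univ,
    filter_true]

end Empirical

theorem sum_prod_le_card {ι α τ : Type*} [Fintype ι] [DecidableEq ι] [Fintype α] [DecidableEq τ]
    (T : (ι → α) → τ) (t : Finset τ) (hT : ∀ x, T x ∈ t) (g : τ → ι → α → ℝ)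
    (hg0 : ∀ c i a, 0 ≤ g c i a) (hg1 : ∀ x i, ∑ a, g (T x) i a ≤ 1) :
    ∑ x, ∏ i, g (T x) i (x i) ≤ #t := by
  rw [← sum_fiberwise_of_maps_to fun x _ => hT x]
  calc ∑ c ∈ t, ∑ x ∈ {x | T x = c}, ∏ i, g (T x) i (x i) ≤ ∑ c ∈ t, (1 : ℝ) :=
        sum_le_sum fun c _ => ?_
    _ = #t := by simp
  rcases ({x | T x = c} : Finset (ι → α)).eq_empty_or_nonempty with h | ⟨x₀, hx₀⟩
  · simp [h]
  obtain rfl := (mem_filter.1 hx₀).2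
  -- The fibre weighs at most the total mass `∏ i, ∑ a, g (T x₀) i a` of the product weight.
  calc ∑ x ∈ {x | T x = T x₀}, ∏ i, g (T x) i (x i)
      = ∑ x ∈ {x | T x = T x₀}, ∏ i, g (T x₀) i (x i) :=
        sum_congr rfl fun x hx => by rw [(mem_filter.1 hx).2]
    _ ≤ ∑ x : ι → α, ∏ i, g (T x₀) i (x i) :=
        sum_le_sum_of_subset_of_nonneg (filter_subset _ _) fun x _ _ =>
          prod_nonneg fun i _ => hg0 _ _ _
    _ = ∏ i, ∑ a, g (T x₀) i a := (Fintype.prod_sum fun i a => g (T x₀) i a).symm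
    _ ≤ 1 := prod_le_one (fun i _ => sum_nonneg fun a _ => hg0 _ _ _) fun i _ => hg1 x₀ i

section Blocks

variable {n : ℕ} {κ 𝒳 : Type*} [Fintype κ] [DecidableEq κ] [Fintype 𝒳] [DecidableEq 𝒳]

theorem sum_prod_typeOn_le (s : Fin n → κ) :
    ∑ x : Fin n → 𝒳, ∏ i, typeOn {k | s k = s i} x (x i) ≤
      ((n : ℝ) + 1) ^ (Fintype.card κ * Fintype.card 𝒳) := by
  have hT : ∀ x : Fin n → 𝒳, (fun j a => #{k ∈ {k | s k = j} | x k = a}) ∈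
      Fintype.piFinset fun _ => Fintype.piFinset fun _ => range (n + 1) := fun x =>
    Fintype.mem_piFinset.2 fun j => Fintype.mem_piFinset.2 fun a => mem_range.2 <|
      Nat.lt_succ_of_le ((card_le_univ _).trans (Fintype.card_fin n).le)
  refine (sum_prod_le_card _ _ hT (fun c i a => (c (s i) a : ℝ) / #{k | s k = s i})
    (fun _ _ _ => by positivity) fun x i => sum_typeOn_le_one _ x).trans_eq ?_
  simp [Fintype.card_piFinset, pow_mul']

noncomputable def blockRelEntropy (s : Fin n → κ) (Q : 𝒳 → ℝ) (x : Fin n → 𝒳) : ℝ :=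
  ∑ j, (#{k | s k = j} : ℝ) / n * relEntropy (typeOn {k | s k = j} x) Q

theorem natCast_mul_blockRelEntropy (hn : n ≠ 0) (s : Fin n → κ) (Q : 𝒳 → ℝ) (x : Fin n → 𝒳) :
    n * blockRelEntropy s Q x = ∑ i, Real.log (typeOn {k | s k = s i} x (x i) / Q (x i)) := by
  have hblock : ∀ j, (n : ℝ) * ((#{k | s k = j} : ℝ) / n * relEntropy (typeOn {k | s k = j} x) Q)
      = ∑ i ∈ {k | s k = j}, Real.log (typeOn {k | s k = j} x (x i) / Q (x i)) := fun j => by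
    rw [← mul_assoc, mul_div_cancel₀ _ (Nat.cast_ne_zero.2 hn), relEntropy,
      card_mul_sum_typeOn_mul]
  rw [blockRelEntropy, mul_sum, sum_congr rfl fun j _ => hblock j, ← sum_fiberwise univ s]
  exact sum_congr rfl fun j _ => sum_congr rfl fun i hi => by rw [(mem_filter.1 hi).2]

theorem prod_eq_exp_mul_prod_typeOn (hn : n ≠ 0) (s : Fin n → κ) {Q : 𝒳 → ℝ} {x : Fin n → 𝒳}
    (hQ : ∀ i, 0 < Q (x i)) :
    ∏ i, Q (x i) =
      Real.exp (-(n * blockRelEntropy s Q x)) * ∏ i, typeOn {k | s k = s i} x (x i) := by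
  have ht : ∀ i, 0 < typeOn {k | s k = s i} x (x i) := fun i => by
    unfold typeOn
    have hi : ({k ∈ {k | s k = s i} | x k = x i} : Finset (Fin n)).Nonempty := ⟨i, by simp⟩
    have := hi.mono (filter_subset _ _)
    positivity
  rw [natCast_mul_blockRelEntropy hn, ← sum_neg_distrib, Real.exp_sum, ← prod_mul_distrib]
  refine prod_congr rfl fun i _ => ?_
  rw [← Real.log_inv, inv_div, Real.exp_log (div_pos (hQ i) (ht i)), div_mul_cancel₀ _ (ht i).ne']

theorem prod_le_exp_mul_prod_typeOn (hn : n ≠ 0) (s : Fin n → κ) {Q : 𝒳 → ℝ}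
    (hQ0 : ∀ a, 0 ≤ Q a) {Δ : ℝ} {x : Fin n → 𝒳}
    (hx : (∃ i, Q (x i) = 0) ∨ Δ < blockRelEntropy s Q x) :
    ∏ i, Q (x i) ≤ Real.exp (-(n * Δ)) * ∏ i, typeOn {k | s k = s i} x (x i) := by
  have hprod : 0 ≤ ∏ i, typeOn {k | s k = s i} x (x i) :=
    prod_nonneg fun i _ => typeOn_nonneg _ x _
  by_cases hQx : ∃ i, Q (x i) = 0
  · obtain ⟨i, hi⟩ := hQx
    rw [prod_eq_zero (mem_univ i) hi]
    exact mul_nonneg (Real.exp_pos _).le hprod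
  push Not at hQx
  rw [prod_eq_exp_mul_prod_typeOn hn s fun i => (hQ0 _).lt_of_ne' (hQx i)]
  refine mul_le_mul_of_nonneg_right (Real.exp_le_exp.2 (neg_le_neg ?_)) hprod
  exact mul_le_mul_of_nonneg_left (hx.resolve_left (not_exists.2 hQx)).le (Nat.cast_nonneg n)

theorem prodProb_blockRelEntropy_gt_le (hn : n ≠ 0) (s : Fin n → κ) {Q : 𝒳 → ℝ} (hQ0 : ∀ a, 0 ≤ Q a) (Δ : ℝ) :
    prodProb Q {x | (∃ i, Q (x i) = 0) ∨ Δ < blockRelEntropy s Q x} ≤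
      Real.exp (-(n * Δ)) * ((n : ℝ) + 1) ^ (Fintype.card κ * Fintype.card 𝒳) := by
  calc prodProb Q {x | (∃ i, Q (x i) = 0) ∨ Δ < blockRelEntropy s Q x}
      ≤ ∑ x, Real.exp (-(n * Δ)) * ∏ i, typeOn {k | s k = s i} x (x i) :=
        sum_le_sum fun x _ => Set.indicator_le'
          (fun x hx => prod_le_exp_mul_prod_typeOn hn s hQ0 hx)
          (fun x _ => mul_nonneg (Real.exp_pos _).le (prod_nonneg fun i _ => typeOn_nonneg _ x _)) x
    _ ≤ Real.exp (-(n * Δ)) * ((n : ℝ) + 1) ^ (Fintype.card κ * Fintype.card 𝒳) := by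
      rw [← mul_sum]
      exact mul_le_mul_of_nonneg_left (sum_prod_typeOn_le s) (Real.exp_pos _).le

end Blocks

theorem empMIOn_univ_le {n : ℕ} {κ 𝒳 𝒴 : Type*} [Fintype κ] [DecidableEq κ] [Fintype 𝒳]
    [DecidableEq 𝒳] [Fintype 𝒴] [DecidableEq 𝒴] (hn : n ≠ 0) (s : Fin n → κ) {Q : 𝒳 → ℝ}
    (hQ0 : ∀ a, 0 ≤ Q a) (hQ1 : ∑ a, Q a ≤ 1) {x : Fin n → 𝒳} (hx : ∀ i, 0 < Q (x i))
    (y : Fin n → 𝒴) :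
    empMIOn univ x y ≤
      ∑ j, (#{k | s k = j} : ℝ) / n * empMIOn {k | s k = j} x y + blockRelEntropy s Q x := by
  have hsupp : ∀ j a b, 0 < empDistOn {k | s k = j} x y a b → 0 < Q a := fun j a b h => by
    obtain ⟨i, hi⟩ : ({i ∈ {k | s k = j} | x i = a ∧ y i = b} : Finset (Fin n)).Nonempty :=
      nonempty_of_ne_empty fun he => by simp [empDistOn, he] at h
    exact (mem_filter.1 hi).2.1 ▸ hx i
  have hmass :
      ∑ a, Q a ≤ ∑ a, ∑ b, ∑ j, (#{k | s k = j} : ℝ) / n * empDistOn {k | s k = j} x y a b := by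
    simpa only [sum_card_div_mul_empDistOn, sum_empDistOn,
      sum_typeOn (univ_nonempty_iff.2 ⟨⟨0, Nat.pos_of_ne_zero hn⟩⟩)] using hQ1
  have key := miOf_sum_le (fun j => (#{k | s k = j} : ℝ) / n)
    (fun j => empDistOn {k | s k = j} x y) Q
    (fun j => by positivity) (fun j a b => by unfold empDistOn; positivity) hQ0 hsupp hmass
  simp only [sum_card_div_mul_empDistOn, sum_empDistOn, mul_add, sum_add_distrib] at key
  exact key

theorem statement5_general {𝒳 𝒴 : Type*} [Fintype 𝒳] [Fintype 𝒴] [DecidableEq 𝒳] [DecidableEq 𝒴]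
    {n p : ℕ} (hn : 0 < n) (A : Fin p → Finset (Fin n))
    (hdisj : ∀ i j, i ≠ j → Disjoint (A i) (A j))
    (hcover : ∀ k : Fin n, ∃ i, k ∈ A i)
    (Q : 𝒳 → ℝ) (hQ0 : ∀ a, 0 ≤ Q a) (hQ1 : ∑ a, Q a = 1)
    (Δ : ℝ) :
    ∃ J : Set (Fin n → 𝒳),
      (∀ x : Fin n → 𝒳, x ∉ J → ∀ y : Fin n → 𝒴,
        empMIOn Finset.univ x y - Δ ≤
          ∑ i, ((A i).card : ℝ) / (n : ℝ) * empMIOn (A i) x y) ∧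
      prodProb Q J ≤
        Real.exp (-(n : ℝ) *
          (Δ - (p : ℝ) * (Fintype.card 𝒳 : ℝ) * Real.log ((n : ℝ) + 1) / (n : ℝ))) := by
  obtain ⟨s, rfl⟩ := exists_eq_filter_of_partition A hdisj hcover
  refine ⟨{x | (∃ i, Q (x i) = 0) ∨ Δ < blockRelEntropy s Q x}, fun x hx y => ?_, ?_⟩
  · simp only [Set.mem_ofPred_eq, not_or, not_exists, not_lt] at hx
    have := empMIOn_univ_le hn.ne' s hQ0 hQ1.le (fun i => (hQ0 _).lt_of_ne' (hx.1 i)) y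
    linarith [hx.2]
  · refine (prodProb_blockRelEntropy_gt_le hn.ne' s hQ0 Δ).trans_eq ?_
    rw [Fintype.card_fin, ← Real.rpow_natCast, Real.rpow_def_of_pos (by positivity),
      ← Real.exp_add]
    congr 1
    field_simp
    push_cast
    ring

theorem statement5 {𝒳 𝒴 : Type*} [Fintype 𝒳] [Fintype 𝒴] [DecidableEq 𝒳] [DecidableEq 𝒴]
    {n p : ℕ} (hn : 0 < n) (A : Fin p → Finset (Fin n))
    (hne : ∀ i, (A i).Nonempty)
    (hdisj : ∀ i j, i ≠ j → Disjoint (A i) (A j))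
    (hcover : ∀ k : Fin n, ∃ i, k ∈ A i)
    (Q : 𝒳 → ℝ) (hQ0 : ∀ a, 0 ≤ Q a) (hQ1 : ∑ a, Q a = 1)
    (Δ : ℝ) (hΔ : 0 < Δ) :
    ∃ J : Set (Fin n → 𝒳),
      (∀ x : Fin n → 𝒳, x ∉ J → ∀ y : Fin n → 𝒴,
        empMIOn Finset.univ x y - Δ ≤
          ∑ i, ((A i).card : ℝ) / (n : ℝ) * empMIOn (A i) x y) ∧
      prodProb Q J ≤
        Real.exp (-(n : ℝ) *
          (Δ - (p : ℝ) * (Fintype.card 𝒳 : ℝ) * Real.log ((n : ℝ) + 1) / (n : ℝ))) :=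
  statement5_general hn A hdisj hcover Q hQ0 hQ1 Δ
end

section
/- Let {A_i}_{i=1}^p be a partition of the index set {1,…,n} into disjoint nonempty subsets, and let x ∈ ℝ^n have i.i.d. Gaussian entries x_i ∼ 𝒩(0,P) with P > 0. For y ∈ ℝ^n, let ρ̂_i = ρ̂(x_{A_i}, y_{A_i}) be the empirical correlation factor of the sub-sequences on A_i and ρ̂ = ρ̂(x,y) the overall empirical correlation factor. Then for every Δ with 0 < Δ ≤ 1/7 there exists a subset J_Δ ⊆ ℝ^n such that: (i) for every x ∉ J_Δ and every y ∈ ℝ^n, Σ_{i=1}^p (|A_i|/n)·ρ̂_i² ≥ ρ̂² − Δ; and (ii) Pr(x ∈ J_Δ) ≤ 2^p · e^{−nΔ²/8}. -/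
/-!
Write `X i = ‖x_{A i}‖²` and `T = ‖x‖²`. Cauchy–Schwarz across the blocks gives
`ρ̂² T ≤ ∑ ρ̂ᵢ² X i`, and since `0 ≤ ρ̂ᵢ² ≤ 1` the excess `∑ ρ̂ᵢ² (X i / T - |A i| / n)` is at most
the total excess `∑ i ∈ S, (X i / T - |A i| / n)` of the group `S` of blocks where it is positive.
So (i) holds outside the union `J` of the `2 ^ p` events "the blocks of `S` carry more than the
fraction `|B| / n + Δ` of the energy", `B = ⋃ i ∈ S, A i`.

Each such event `{0 < ‖x_B‖² - a ‖x‖²}` is bounded by a Chernoff bound at `t = Δ / (2P)`: a Gaussian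
coordinate has `E exp (c x²) = (1 - 2cP)^(-1/2)`, and `-log (1 - s) ≤ s / (1 - s)` bounds the product
of these factors by `exp (-n Δ² / 8)` as long as `Δ ≤ 1/7`.
-/

open MeasureTheory ProbabilityTheory Finset
open scoped NNReal

/-- Empirical correlation factor of the sub-sequences of `x,y` on the index set `A`,
with the convention that it is `0` when either sub-sequence is `0` (division by zero). -/
noncomputable def empCorrOn {n : ℕ} (A : Finset (Fin n)) (x y : Fin n → ℝ) : ℝ :=
  (∑ i ∈ A, x i * y i) /
    (Real.sqrt (∑ i ∈ A, (x i) ^ 2) * Real.sqrt (∑ i ∈ A, (y i) ^ 2))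

open Real

lemma inv_sqrt_one_sub_le_exp {s : ℝ} (hs : s < 1) :
    (√(1 - s))⁻¹ ≤ exp (s / (2 * (1 - s))) := by
  have hpos : 0 < 1 - s := sub_pos.2 hs
  rw [inv_le_comm₀ (sqrt_pos.2 hpos) (exp_pos _), ← exp_neg,
    le_sqrt (exp_pos _).le hpos.le, ← exp_nat_mul, ← le_log_iff_exp_le hpos]
  convert one_sub_inv_le_log_of_pos hpos using 1
  field_simp
  ring

lemma div_two_mul_one_sub_le {s : ℝ} (hs : |s| ≤ 1 / 7) :
    s / (2 * (1 - s)) ≤ s / 2 + 7 / 12 * s ^ 2 := by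
  obtain ⟨hs₁, hs₂⟩ := abs_le.1 hs
  rw [div_le_iff₀ (by linarith)]
  nlinarith [sq_nonneg s]

lemma integral_exp_mul_sq_gaussianReal {v : ℝ≥0} (hv : v ≠ 0) {c : ℝ} (hc : 2 * c * v < 1) :
    ∫ t, exp (c * t ^ 2) ∂gaussianReal 0 v = (√(1 - 2 * c * v))⁻¹ := by
  have hv₀ : (0 : ℝ) < v := by positivity
  have hb : 0 < 1 / (2 * v) - c := by
    rw [sub_pos, lt_div_iff₀ (by positivity)]; linarith
  have hpdf : ∀ t, gaussianPDFReal 0 v t • exp (c * t ^ 2) =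
      (√(2 * π * v))⁻¹ * exp (-(1 / (2 * v) - c) * t ^ 2) := fun t => by
    rw [gaussianPDFReal, smul_eq_mul, mul_assoc, ← exp_add]
    congr 2
    field_simp
    ring
  rw [integral_gaussianReal_eq_integral_smul hv, integral_congr_ae (ae_of_all _ hpdf),
    integral_const_mul, integral_gaussian, ← sqrt_inv, ← sqrt_mul (by positivity), ← sqrt_inv]
  congr 1
  field_simp

lemma integral_exp_sum_mul_sq_pi_gaussianReal {ι : Type*} [Fintype ι] {v : ℝ≥0} (hv : v ≠ 0)
    {c : ι → ℝ} (hc : ∀ k, 2 * c k * v < 1) :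
    ∫ x, exp (∑ k, c k * x k ^ 2) ∂Measure.pi (fun _ : ι => gaussianReal 0 v) =
      ∏ k, (√(1 - 2 * c k * v))⁻¹ := by
  simp_rw [exp_sum]
  rw [integral_fintype_prod_eq_prod (fun k t => exp (c k * t ^ 2))]
  exact prod_congr rfl fun k _ => integral_exp_mul_sq_gaussianReal hv (hc k)

-- The per-coordinate Chernoff exponents on and off `B`, weighted by `θ = #B / n`, with `a = θ + Δ`.
lemma chernoff_exponent_le {θ Δ : ℝ} (hθ : 0 ≤ θ) (hΔ : 0 < Δ) (hΔ7 : Δ ≤ 1 / 7)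
    (ha : θ + Δ < 1) :
    θ * (Δ * (1 - (θ + Δ)) / (2 * (1 - Δ * (1 - (θ + Δ))))) +
      (1 - θ) * (Δ * -(θ + Δ) / (2 * (1 - Δ * -(θ + Δ)))) ≤ -Δ ^ 2 / 8 := by
  set a := θ + Δ
  have hin : |Δ * (1 - a)| ≤ 1 / 7 := by
    rw [abs_le]; constructor <;> nlinarith
  have hout : |Δ * -a| ≤ 1 / 7 := by
    rw [abs_le]; constructor <;> nlinarith
  have h₁ := mul_le_mul_of_nonneg_left (div_two_mul_one_sub_le hin) hθ
  have h₂ := mul_le_mul_of_nonneg_left (div_two_mul_one_sub_le hout) (by linarith : 0 ≤ 1 - θ)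
  nlinarith [mul_pos hΔ hΔ, sq_nonneg (a - 1 / 2)]

lemma prod_inv_sqrt_one_sub_le_exp_sum {ι : Type*} [Fintype ι] {s : ι → ℝ} (hs : ∀ k, s k < 1) :
    ∏ k, (√(1 - s k))⁻¹ ≤ exp (∑ k, s k / (2 * (1 - s k))) := by
  rw [exp_sum]
  exact prod_le_prod (fun k _ => by positivity) fun k _ => inv_sqrt_one_sub_le_exp (hs k)

section Chernoff

variable {ι : Type*} [Fintype ι]

lemma sum_ite_mem_const [DecidableEq ι] (B : Finset ι) (α β : ℝ) :
    ∑ k, (if k ∈ B then α else β) = #B * α + (Fintype.card ι - #B) * β := by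
  rw [sum_ite, sum_const, sum_const, filter_mem_eq_inter, univ_inter, filter_not,
    filter_mem_eq_inter, univ_inter, card_sdiff_of_subset (subset_univ B), card_univ,
    nsmul_eq_mul, nsmul_eq_mul, Nat.cast_sub (card_le_univ B)]

lemma sum_ite_mul_sq [DecidableEq ι] (B : Finset ι) (a : ℝ) (x : ι → ℝ) :
    ∑ k, (if k ∈ B then 1 - a else -a) * x k ^ 2 = ∑ k ∈ B, x k ^ 2 - a * ∑ k, x k ^ 2 := by
  rw [mul_sum, ← Fintype.sum_ite_mem B fun k => x k ^ 2, ← sum_sub_distrib]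
  exact sum_congr rfl fun k _ => by split_ifs <;> ring

def excessEnergySet (B : Finset ι) (Δ : ℝ) : Set (ι → ℝ) :=
  {x | (#B / Fintype.card ι + Δ) * ∑ k, x k ^ 2 < ∑ k ∈ B, x k ^ 2}

lemma excessEnergySet_eq_empty {B : Finset ι} {Δ : ℝ} (h : 1 ≤ #B / Fintype.card ι + Δ) :
    excessEnergySet B Δ = ∅ := by
  refine Set.eq_empty_of_forall_notMem fun x hx => ?_
  have hB : ∑ k ∈ B, x k ^ 2 ≤ ∑ k, x k ^ 2 :=
    sum_le_sum_of_subset_of_nonneg (subset_univ B) fun k _ _ => sq_nonneg _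
  have hT : 0 ≤ ∑ k, x k ^ 2 := sum_nonneg fun k _ => sq_nonneg _
  exact (lt_irrefl _) (hx.trans_le (hB.trans (le_mul_of_one_le_left hT h)))

theorem measure_pi_gaussianReal_excessEnergySet_le [Nonempty ι] {v : ℝ≥0} (hv : v ≠ 0)
    {Δ : ℝ} (hΔ : 0 < Δ) (hΔ7 : Δ ≤ 1 / 7) (B : Finset ι) :
    Measure.pi (fun _ : ι => gaussianReal 0 v) (excessEnergySet B Δ) ≤
      ENNReal.ofReal (exp (-(Fintype.card ι) * Δ ^ 2 / 8)) := by
  classical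
  set n : ℝ := (Fintype.card ι : ℝ)
  set θ : ℝ := #B / n
  set a := θ + Δ
  rcases le_or_gt 1 a with ha | ha
  · simp [excessEnergySet_eq_empty ha]
  set μ := Measure.pi (fun _ : ι => gaussianReal 0 v)
  have hn : 0 < n := by positivity
  have hv₀ : (0 : ℝ) < v := by positivity
  set c : ι → ℝ := fun k => if k ∈ B then 1 - a else -a
  set t := Δ / (2 * v)
  have htc : ∀ k, 2 * (t * c k) * v = Δ * c k := fun k => by
    simp only [t]; field_simp
  have hθ : 0 ≤ θ := by positivity
  have hc : ∀ k, Δ * c k < 1 := fun k => by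
    simp only [c]; split_ifs <;> nlinarith
  have hsub : excessEnergySet B Δ ⊆ {x | 0 ≤ ∑ k, c k * x k ^ 2} := fun x hx => by
    rw [Set.mem_ofPred_eq, sum_ite_mul_sq]
    exact sub_nonneg.2 hx.le
  have hmgf : mgf (fun x => ∑ k, c k * x k ^ 2) μ t = ∏ k, (√(1 - Δ * c k))⁻¹ := by
    simp_rw [mgf, mul_sum, ← mul_assoc, ← htc]
    exact integral_exp_sum_mul_sq_pi_gaussianReal hv fun k => (htc k).symm ▸ hc k
  have hexp : ∑ k, Δ * c k / (2 * (1 - Δ * c k)) ≤ -n * Δ ^ 2 / 8 := by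
    have hite : ∀ k, Δ * c k / (2 * (1 - Δ * c k)) = if k ∈ B
        then Δ * (1 - a) / (2 * (1 - Δ * (1 - a))) else Δ * -a / (2 * (1 - Δ * -a)) :=
      fun k => by simp only [c]; split_ifs <;> rfl
    have hB : (#B : ℝ) = n * θ := by simp only [θ]; field_simp
    rw [sum_congr rfl fun k _ => hite k, sum_ite_mem_const, hB]
    have := mul_le_mul_of_nonneg_left (chernoff_exponent_le hθ hΔ hΔ7 ha) hn.le
    linear_combination this
  have hint : Integrable (fun x => exp (t * ∑ k, c k * x k ^ 2)) μ := .of_integral_ne_zero <| by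
    rw [← mgf, hmgf]
    exact prod_ne_zero_iff.2 fun k _ => inv_ne_zero (sqrt_pos.2 (sub_pos.2 (hc k))).ne'
  calc μ (excessEnergySet B Δ) ≤ μ {x | 0 ≤ ∑ k, c k * x k ^ 2} := measure_mono hsub
    _ = ENNReal.ofReal (μ.real {x | 0 ≤ ∑ k, c k * x k ^ 2}) :=
        (ofReal_measureReal (measure_ne_top _ _)).symm
    _ ≤ ENNReal.ofReal (exp (-n * Δ ^ 2 / 8)) := by
      gcongr
      calc μ.real {x | 0 ≤ ∑ k, c k * x k ^ 2}
          ≤ exp (-t * 0) * mgf (fun x => ∑ k, c k * x k ^ 2) μ t :=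
            measure_ge_le_exp_mul_mgf 0 (by positivity) hint
        _ = ∏ k, (√(1 - Δ * c k))⁻¹ := by rw [mul_zero, exp_zero, one_mul, hmgf]
        _ ≤ exp (∑ k, Δ * c k / (2 * (1 - Δ * c k))) := prod_inv_sqrt_one_sub_le_exp_sum hc
        _ ≤ exp (-n * Δ ^ 2 / 8) := exp_le_exp.2 hexp

end Chernoff

lemma sum_eq_sum_sum_of_partition {ι κ M : Type*} [Fintype ι] [DecidableEq ι] [Fintype κ]
    [AddCommMonoid M] (A : κ → Finset ι) (hdisj : ∀ i j, i ≠ j → Disjoint (A i) (A j))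
    (hcover : ∀ k, ∃ i, k ∈ A i) (f : ι → M) :
    ∑ k, f k = ∑ i, ∑ k ∈ A i, f k := by
  rw [← sum_biUnion fun i _ j _ hij => hdisj i j hij]
  congr 1
  ext k
  simpa using hcover k

lemma sum_mul_le_sum_mul_add_of_forall_sum_le {κ : Type*} [Fintype κ] {q f g : κ → ℝ} {δ : ℝ}
    (hq₀ : ∀ i, 0 ≤ q i) (hq₁ : ∀ i, q i ≤ 1)
    (h : ∀ S : Finset κ, ∑ i ∈ S, f i ≤ ∑ i ∈ S, g i + δ) :
    ∑ i, q i * f i ≤ ∑ i, q i * g i + δ := by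
  classical
  have hpos : ∑ i, q i * (f i - g i) ≤ ∑ i ∈ univ.filter (fun i => g i < f i), (f i - g i) := by
    rw [sum_filter]
    refine sum_le_sum fun i _ => ?_
    split_ifs with hi
    · nlinarith [hq₁ i]
    · nlinarith [hq₀ i]
  have := h (univ.filter fun i => g i < f i)
  simp only [mul_sub, sum_sub_distrib] at hpos
  linarith

lemma empCorrOn_mul_sqrt_mul_sqrt {n : ℕ} (A : Finset (Fin n)) (x y : Fin n → ℝ) :
    empCorrOn A x y * (√(∑ k ∈ A, x k ^ 2) * √(∑ k ∈ A, y k ^ 2)) = ∑ k ∈ A, x k * y k := by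
  rcases eq_or_ne (√(∑ k ∈ A, x k ^ 2) * √(∑ k ∈ A, y k ^ 2)) 0 with h | h
  · rw [h, mul_zero, eq_comm]
    rcases mul_eq_zero.1 h with h | h <;>
    · rw [sqrt_eq_zero (sum_nonneg fun k _ => sq_nonneg _),
        sum_eq_zero_iff_of_nonneg fun k _ => sq_nonneg _] at h
      exact sum_eq_zero fun k hk => by simp [pow_eq_zero_iff two_ne_zero |>.1 (h k hk)]
  · exact div_mul_cancel₀ _ h

lemma sq_empCorrOn_le_one {n : ℕ} (A : Finset (Fin n)) (x y : Fin n → ℝ) :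
    empCorrOn A x y ^ 2 ≤ 1 := by
  rw [empCorrOn, div_pow, mul_pow, sq_sqrt (sum_nonneg fun k _ => sq_nonneg _),
    sq_sqrt (sum_nonneg fun k _ => sq_nonneg _)]
  exact div_le_one_of_le₀ (sum_mul_sq_le_sq_mul_sq A x y)
    (mul_nonneg (sum_nonneg fun k _ => sq_nonneg _) (sum_nonneg fun k _ => sq_nonneg _))

lemma sq_empCorrOn_univ_mul_le {n p : ℕ} (A : Fin p → Finset (Fin n))
    (hdisj : ∀ i j, i ≠ j → Disjoint (A i) (A j)) (hcover : ∀ k, ∃ i, k ∈ A i)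
    (x y : Fin n → ℝ) :
    empCorrOn univ x y ^ 2 * ∑ k, x k ^ 2 ≤
      ∑ i, empCorrOn (A i) x y ^ 2 * ∑ k ∈ A i, x k ^ 2 := by
  have hsq : ∀ s : Finset (Fin n), ∀ z : Fin n → ℝ, 0 ≤ ∑ k ∈ s, z k ^ 2 :=
    fun s z => sum_nonneg fun k _ => sq_nonneg _
  rcases (hsq univ y).eq_or_lt with hU | hU
  · rw [empCorrOn, ← hU, sqrt_zero, mul_zero, div_zero, sq, zero_mul, zero_mul]
    exact sum_nonneg fun i _ => mul_nonneg (sq_nonneg _) (hsq _ x)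
  have hCS : (∑ k, x k * y k) ^ 2 ≤
      (∑ i, empCorrOn (A i) x y ^ 2 * ∑ k ∈ A i, x k ^ 2) * ∑ k, y k ^ 2 := by
    rw [sum_eq_sum_sum_of_partition A hdisj hcover, sum_eq_sum_sum_of_partition A hdisj hcover]
    simp_rw [← empCorrOn_mul_sqrt_mul_sqrt (A _) x y, ← mul_assoc]
    calc _ ≤ (∑ i, (empCorrOn (A i) x y * √(∑ k ∈ A i, x k ^ 2)) ^ 2) *
          ∑ i, √(∑ k ∈ A i, y k ^ 2) ^ 2 := sum_mul_sq_le_sq_mul_sq _ _ _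
      _ = _ := by simp_rw [mul_pow, sq_sqrt (hsq _ _)]
  rw [← empCorrOn_mul_sqrt_mul_sqrt, mul_pow, mul_pow, sq_sqrt (hsq univ x),
    sq_sqrt (hsq univ y), ← mul_assoc] at hCS
  exact le_of_mul_le_mul_right hCS hU

theorem sq_empCorrOn_univ_sub_le_sum {n p : ℕ} (A : Fin p → Finset (Fin n))
    (hdisj : ∀ i j, i ≠ j → Disjoint (A i) (A j)) (hcover : ∀ k, ∃ i, k ∈ A i)
    {Δ : ℝ} (hΔ : 0 ≤ Δ) {x : Fin n → ℝ}
    (hx : ∀ S : Finset (Fin p), x ∉ excessEnergySet (S.biUnion A) Δ) (y : Fin n → ℝ) :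
    empCorrOn univ x y ^ 2 - Δ ≤ ∑ i, (#(A i) : ℝ) / n * empCorrOn (A i) x y ^ 2 := by
  set T := ∑ k, x k ^ 2
  have hRHS : 0 ≤ ∑ i, (#(A i) : ℝ) / n * empCorrOn (A i) x y ^ 2 :=
    sum_nonneg fun i _ => by positivity
  rcases (sum_nonneg fun k _ => sq_nonneg (x k) : 0 ≤ T).eq_or_lt with hT | hT
  · rw [empCorrOn, ← hT, sqrt_zero, zero_mul, div_zero, zero_pow two_ne_zero]
    linarith
  have hgood : ∀ S : Finset (Fin p),
      ∑ i ∈ S, ∑ k ∈ A i, x k ^ 2 ≤ ∑ i ∈ S, (#(A i) : ℝ) / n * T + Δ * T := by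
    intro S
    have := hx S
    rw [excessEnergySet, Set.mem_ofPred_eq, not_lt] at this
    rw [sum_biUnion fun i _ j _ hij => hdisj i j hij,
      card_biUnion fun i _ j _ hij => hdisj i j hij, Fintype.card_fin] at this
    push_cast at this
    rw [← sum_mul, ← sum_div]
    linarith
  have hsum := sum_mul_le_sum_mul_add_of_forall_sum_le (fun i => sq_nonneg _)
    (fun i => sq_empCorrOn_le_one (A i) x y) hgood
  have hweights : ∑ i, empCorrOn (A i) x y ^ 2 * ((#(A i) : ℝ) / n * T) + Δ * T =
      (∑ i, (#(A i) : ℝ) / n * empCorrOn (A i) x y ^ 2 + Δ) * T := by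
    rw [add_mul, sum_mul]
    exact congrArg (· + Δ * T) (sum_congr rfl fun i _ => by ring)
  have hCS := (sq_empCorrOn_univ_mul_le A hdisj hcover x y).trans (hweights ▸ hsum)
  linarith [le_of_mul_le_mul_right hCS hT]

theorem statement6_general {n p : ℕ} (hn : 0 < n) (A : Fin p → Finset (Fin n))
    (hdisj : ∀ i j, i ≠ j → Disjoint (A i) (A j))
    (hcover : ∀ k : Fin n, ∃ i, k ∈ A i)
    (P : ℝ≥0) (hP : 0 < P) (Δ : ℝ) (hΔ : 0 < Δ) (hΔ7 : Δ ≤ 1 / 7) :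
    ∃ J : Set (Fin n → ℝ),
      (∀ x : Fin n → ℝ, x ∉ J → ∀ y : Fin n → ℝ,
        (empCorrOn Finset.univ x y) ^ 2 - Δ ≤
          ∑ i, ((A i).card : ℝ) / (n : ℝ) * (empCorrOn (A i) x y) ^ 2) ∧
      Measure.pi (fun _ : Fin n => gaussianReal 0 P) J ≤
        ENNReal.ofReal (2 ^ p * Real.exp (-(n : ℝ) * Δ ^ 2 / 8)) := by
  have : Nonempty (Fin n) := Fin.pos_iff_nonempty.1 hn
  refine ⟨⋃ S : Finset (Fin p), excessEnergySet (S.biUnion A) Δ, fun x hx y => ?_, ?_⟩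
  · exact sq_empCorrOn_univ_sub_le_sum A hdisj hcover hΔ.le (by simpa using hx) y
  calc _ ≤ ∑' S : Finset (Fin p), Measure.pi (fun _ : Fin n => gaussianReal 0 P)
          (excessEnergySet (S.biUnion A) Δ) := measure_iUnion_le _
    _ ≤ ∑' _ : Finset (Fin p), ENNReal.ofReal (exp (-(n : ℝ) * Δ ^ 2 / 8)) :=
        ENNReal.tsum_le_tsum fun S => by
          simpa using measure_pi_gaussianReal_excessEnergySet_le hP.ne' hΔ hΔ7 (S.biUnion A)
    _ = _ := by
        rw [tsum_fintype, sum_const, card_univ, Fintype.card_finset, Fintype.card_fin,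
          nsmul_eq_mul, ENNReal.ofReal_mul (by positivity), ENNReal.ofReal_pow zero_le_two]
        norm_num

theorem statement6 {n p : ℕ} (hn : 0 < n) (A : Fin p → Finset (Fin n))
    (hne : ∀ i, (A i).Nonempty)
    (hdisj : ∀ i j, i ≠ j → Disjoint (A i) (A j))
    (hcover : ∀ k : Fin n, ∃ i, k ∈ A i)
    (P : ℝ≥0) (hP : 0 < P) (Δ : ℝ) (hΔ : 0 < Δ) (hΔ7 : Δ ≤ 1 / 7) :
    ∃ J : Set (Fin n → ℝ),
      (∀ x : Fin n → ℝ, x ∉ J → ∀ y : Fin n → ℝ,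
        (empCorrOn Finset.univ x y) ^ 2 - Δ ≤
          ∑ i, ((A i).card : ℝ) / (n : ℝ) * (empCorrOn (A i) x y) ^ 2) ∧
      Measure.pi (fun _ : Fin n => gaussianReal 0 P) J ≤
        ENNReal.ofReal (2 ^ p * Real.exp (-(n : ℝ) * Δ ^ 2 / 8)) :=
  statement6_general hn A hdisj hcover P hP Δ hΔ hΔ7
end

section
/- Let {A_i}_{i=1}^p be a partition of {1,…,n} into disjoint nonempty subsets with λ_i = |A_i|/n, and let x, y ∈ ℝ^n be any vectors with x_{A_i} ≠ 0 for all i and y ≠ 0. Let ρ̂_i = ρ̂(x_{A_i}, y_{A_i}) and ρ̂ = ρ̂(x,y). Then ρ̂² − Σ_{i=1}^p λ_i·ρ̂_i² ≤ Σ_{i=1}^p max(‖x_{A_i}‖²/‖x‖² − λ_i, 0). -/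
/-!
Splitting `∑ xⱼ yⱼ` along the blocks gives `∑ᵢ ρ̂ᵢ ‖x_{Aᵢ}‖ ‖y_{Aᵢ}‖`, so Cauchy–Schwarz over the
blocks yields `ρ̂² ≤ ∑ᵢ (‖x_{Aᵢ}‖² / ‖x‖²) ρ̂ᵢ²`. Subtracting `∑ᵢ λᵢ ρ̂ᵢ²` and using `ρ̂ᵢ² ≤ 1`
bounds each block's contribution `(‖x_{Aᵢ}‖² / ‖x‖² - λᵢ) ρ̂ᵢ²` by its positive part.
-/

open Finset

lemma mul_le_max_zero_of_nonneg_of_le_one {R : Type*} [Ring R] [LinearOrder R]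
    [IsStrictOrderedRing R] {c r : R} (hr₀ : 0 ≤ r) (hr₁ : r ≤ 1) :
    c * r ≤ max c 0 := by
  rcases le_total c 0 with hc | hc
  · exact (mul_nonpos_of_nonpos_of_nonneg hc hr₀).trans (le_max_right _ _)
  · exact (mul_le_of_le_one_right hc hr₁).trans (le_max_left _ _)

section EmpCorr

variable {n : ℕ} (A : Finset (Fin n)) (x y : Fin n → ℝ)

lemma abs_sum_mul_le_sqrt_mul_sqrt :
    |∑ i ∈ A, x i * y i| ≤ √(∑ i ∈ A, x i ^ 2) * √(∑ i ∈ A, y i ^ 2) := by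
  refine abs_le_of_sq_le_sq ?_ (by positivity)
  rw [mul_pow, Real.sq_sqrt (by positivity), Real.sq_sqrt (by positivity)]
  exact sum_mul_sq_le_sq_mul_sq A x y

lemma empCorrOn_sq_le_one : empCorrOn A x y ^ 2 ≤ 1 := by
  rw [sq_le_one_iff_abs_le_one, empCorrOn, abs_div,
    abs_of_nonneg (mul_nonneg (Real.sqrt_nonneg _) (Real.sqrt_nonneg _))]
  exact div_le_one_of_le₀ (abs_sum_mul_le_sqrt_mul_sqrt A x y) (by positivity)

lemma empCorrOn_sq :
    empCorrOn A x y ^ 2 = (∑ i ∈ A, x i * y i) ^ 2 / ((∑ i ∈ A, x i ^ 2) * ∑ i ∈ A, y i ^ 2) := by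
  rw [empCorrOn, div_pow, mul_pow, Real.sq_sqrt (by positivity), Real.sq_sqrt (by positivity)]

/-- Also true when a norm vanishes: then the sum is `0` by Cauchy–Schwarz. -/
lemma sum_mul_eq_empCorrOn_mul :
    ∑ i ∈ A, x i * y i = empCorrOn A x y * (√(∑ i ∈ A, x i ^ 2) * √(∑ i ∈ A, y i ^ 2)) := by
  by_cases h : √(∑ i ∈ A, x i ^ 2) * √(∑ i ∈ A, y i ^ 2) = 0
  · rw [h, mul_zero, ← abs_nonpos_iff, ← h]
    exact abs_sum_mul_le_sqrt_mul_sqrt A x y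
  · exact (div_mul_cancel₀ _ h).symm

end EmpCorr

theorem empCorrOn_biUnion_sq_le {ι : Type*} {n : ℕ} (s : Finset ι) (A : ι → Finset (Fin n))
    (hA : (s : Set ι).PairwiseDisjoint A) (x y : Fin n → ℝ) :
    empCorrOn (s.biUnion A) x y ^ 2 ≤
      ∑ i ∈ s, (∑ j ∈ A i, x j ^ 2) / (∑ j ∈ s.biUnion A, x j ^ 2) * empCorrOn (A i) x y ^ 2 := by
  classical
  set X := ∑ j ∈ s.biUnion A, x j ^ 2
  set Y := ∑ j ∈ s.biUnion A, y j ^ 2 with hYdef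
  set S := ∑ i ∈ s, (empCorrOn (A i) x y * √(∑ j ∈ A i, x j ^ 2)) ^ 2
  have hsplit : ∑ j ∈ s.biUnion A, x j * y j =
      ∑ i ∈ s, (empCorrOn (A i) x y * √(∑ j ∈ A i, x j ^ 2)) * √(∑ j ∈ A i, y j ^ 2) := by
    rw [sum_biUnion hA]
    refine sum_congr rfl fun i _ => ?_
    rw [sum_mul_eq_empCorrOn_mul, mul_assoc]
  have hY : Y = ∑ i ∈ s, √(∑ j ∈ A i, y j ^ 2) ^ 2 := by
    rw [hYdef, sum_biUnion hA]
    exact sum_congr rfl fun i _ => (Real.sq_sqrt (by positivity)).symm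
  have hcs : (∑ j ∈ s.biUnion A, x j * y j) ^ 2 ≤ S * Y := by
    rw [hsplit, hY]
    exact sum_mul_sq_le_sq_mul_sq _ _ _
  have hS : ∑ i ∈ s, (∑ j ∈ A i, x j ^ 2) / X * empCorrOn (A i) x y ^ 2 = S / X := by
    rw [sum_div]
    refine sum_congr rfl fun i _ => ?_
    rw [mul_pow, Real.sq_sqrt (by positivity)]
    ring
  have hSY : S * Y / (X * Y) ≤ S / X := by
    rcases eq_or_ne Y 0 with hY0 | hY0
    · rw [hY0, mul_zero, mul_zero, div_zero]
      positivity
    · rw [mul_div_mul_right _ _ hY0]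
  rw [empCorrOn_sq, hS]
  exact (div_le_div_of_nonneg_right hcs (by positivity)).trans hSY

theorem statement7_general {n p : ℕ} (A : Fin p → Finset (Fin n))
    (hdisj : ∀ i j, i ≠ j → Disjoint (A i) (A j))
    (hcover : ∀ k : Fin n, ∃ i, k ∈ A i)
    (x y : Fin n → ℝ) :
    (empCorrOn Finset.univ x y) ^ 2 -
        ∑ i, ((A i).card : ℝ) / (n : ℝ) * (empCorrOn (A i) x y) ^ 2 ≤
      ∑ i, max ((∑ j ∈ A i, (x j) ^ 2) / (∑ j, (x j) ^ 2) - ((A i).card : ℝ) / (n : ℝ)) 0 := by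
  have hU : univ.biUnion A = univ := eq_univ_of_forall fun k => by simpa using hcover k
  have hsplit := empCorrOn_biUnion_sq_le univ A (fun i _ j _ hij => hdisj i j hij) x y
  rw [hU] at hsplit
  calc _ ≤ ∑ i, (∑ j ∈ A i, x j ^ 2) / (∑ j, x j ^ 2) * empCorrOn (A i) x y ^ 2 -
          ∑ i, ((A i).card : ℝ) / n * empCorrOn (A i) x y ^ 2 := by gcongr
    _ = ∑ i, ((∑ j ∈ A i, x j ^ 2) / (∑ j, x j ^ 2) - (A i).card / n) *
          empCorrOn (A i) x y ^ 2 := by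
        rw [← sum_sub_distrib]
        simp only [sub_mul]
    _ ≤ _ := sum_le_sum fun i _ =>
        mul_le_max_zero_of_nonneg_of_le_one (sq_nonneg _) (empCorrOn_sq_le_one _ _ _)

theorem statement7 {n p : ℕ} (hn : 0 < n) (A : Fin p → Finset (Fin n))
    (hne : ∀ i, (A i).Nonempty)
    (hdisj : ∀ i j, i ≠ j → Disjoint (A i) (A j))
    (hcover : ∀ k : Fin n, ∃ i, k ∈ A i)
    (x y : Fin n → ℝ) (hx : ∀ i, ∃ j ∈ A i, x j ≠ 0) (hy : y ≠ 0) :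
    (empCorrOn Finset.univ x y) ^ 2 -
        ∑ i, ((A i).card : ℝ) / (n : ℝ) * (empCorrOn (A i) x y) ^ 2 ≤
      ∑ i, max ((∑ j ∈ A i, (x j) ^ 2) / (∑ j, (x j) ^ 2) - ((A i).card : ℝ) / (n : ℝ)) 0 :=
  statement7_general A hdisj hcover x y
end

section
/- Let x ∈ ℝ^n have i.i.d. Gaussian entries x_i ∼ 𝒩(0,P) with P > 0, let {A_i}_{i=1}^p be a partition of {1,…,n} into disjoint nonempty subsets with λ_i = |A_i|/n, and let a₁,…,a_p be real coefficients with ā = Σ_{i=1}^p λ_i·a_i > 0, |a_i| ≤ A for all i, and ā ≤ A/8. Then Pr( Σ_{i=1}^p a_i·‖x_{A_i}‖² ≤ 0 ) ≤ e^{−nE}, where E = ā²/(6A²). -/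
open MeasureTheory ProbabilityTheory Finset
open scoped NNReal ENNReal
open Real

/-!
Chernoff bound: with `b j = a i` for `j ∈ A_i`, the event is `∑ b_j x_j² ≤ 0`, whose
probability is at most `E exp(-t ∑ b_j x_j²) = ∏ (1 + s b_j)^{-1/2}` with `s = 2 t P`.
Taking `s = ā / (2A²)` keeps every `|s b_j| ≤ 1/16`, small enough for
`log (1 + u) ≥ u - 2u²/3`, and then `∑ b_j = n ā` and `∑ b_j² ≤ n A²` turn the product
into `exp(-n ā² / (6A²))`.
-/

theorem log_one_add_ge_sub_mul_sq {u : ℝ} (hu : |u| ≤ 1 / 7) :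
    u - 2 / 3 * u ^ 2 ≤ log (1 + u) := by
  have hu1 : |-u| < 1 := by rw [abs_neg]; linarith
  have htaylor := abs_log_sub_add_sum_range_le hu1 2
  simp only [sum_range_succ, sum_range_zero, abs_neg, sub_neg_eq_add] at htaylor
  have hrem : |u| ^ 3 / (1 - |u|) ≤ u ^ 2 / 6 := by
    rw [div_le_iff₀ (by linarith), pow_succ, ← sq_abs u]
    nlinarith [sq_nonneg |u|, abs_nonneg u]
  have := (abs_le.1 htaylor).1
  norm_num at this
  nlinarith

theorem inv_sqrt_one_add_le_exp {u : ℝ} (hu : |u| ≤ 1 / 7) :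
    (√(1 + u))⁻¹ ≤ exp (-(u - 2 / 3 * u ^ 2) / 2) := by
  have hpos : 0 < 1 + u := by linarith [neg_abs_le u]
  rw [sqrt_eq_rpow, ← rpow_neg hpos.le, rpow_def_of_pos hpos]
  gcongr
  linarith [log_one_add_ge_sub_mul_sq hu]

theorem integral_exp_neg_mul_sq_gaussianReal {v : ℝ≥0} (hv : v ≠ 0) {r : ℝ}
    (hr : 0 < 1 + 2 * r * v) :
    ∫ y, exp (-(r * y ^ 2)) ∂gaussianReal 0 v = (√(1 + 2 * r * v))⁻¹ := by
  have hv' : (0 : ℝ) < v := by positivity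
  -- the density times the integrand is again a centred Gaussian kernel, with precision `b`
  set b := (1 + 2 * r * v) / (2 * v)
  have hb : 0 < b := by positivity
  have hkernel : ∀ y : ℝ, gaussianPDFReal 0 v y * exp (-(r * y ^ 2)) =
      (√(2 * π * v))⁻¹ * exp (-b * y ^ 2) := by
    intro y
    rw [gaussianPDFReal, mul_assoc, ← exp_add]
    congr 2
    simp only [b]
    field_simp
    ring
  simp_rw [integral_gaussianReal_eq_integral_smul hv, smul_eq_mul, hkernel,
    integral_const_mul, integral_gaussian]
  rw [← sqrt_inv, ← sqrt_mul (by positivity), ← sqrt_inv]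
  congr 1
  simp only [b]
  field_simp

theorem lintegral_exp_neg_mul_sq_gaussianReal {v : ℝ≥0} (hv : v ≠ 0) {r : ℝ}
    (hr : 0 < 1 + 2 * r * v) :
    ∫⁻ y, ENNReal.ofReal (exp (-(r * y ^ 2))) ∂gaussianReal 0 v =
      ENNReal.ofReal (√(1 + 2 * r * v))⁻¹ := by
  have hint := integral_exp_neg_mul_sq_gaussianReal hv hr
  rw [← hint, ofReal_integral_eq_lintegral_ofReal]
  · exact Integrable.of_integral_ne_zero (by rw [hint]; positivity)
  · exact ae_of_all _ fun y => (exp_pos _).le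

theorem measure_pi_gaussianReal_sum_mul_sq_nonpos_le {ι : Type*} [Fintype ι] {v : ℝ≥0}
    (hv : v ≠ 0) (b : ι → ℝ) {s : ℝ} (hs : 0 ≤ s) (hb : ∀ j, 0 < 1 + s * b j) :
    Measure.pi (fun _ : ι => gaussianReal 0 v) {x | ∑ j, b j * x j ^ 2 ≤ 0} ≤
      ∏ j, ENNReal.ofReal (√(1 + s * b j))⁻¹ := by
  set t := s / (2 * v)
  have ht : 0 ≤ t := by positivity
  have hscale : ∀ j, 2 * (t * b j) * v = s * b j := fun j => by
    simp only [t]; field_simp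
  set f : ι → ℝ → ℝ≥0∞ := fun j y => ENNReal.ofReal (exp (-(t * b j * y ^ 2)))
  have hf : ∀ j, Measurable (f j) := fun j => by fun_prop
  have hexp : ∀ x : ι → ℝ,
      ENNReal.ofReal (exp (-(t * ∑ j, b j * x j ^ 2))) = ∏ j, f j (x j) := fun x => by
    simp only [f, ← ENNReal.ofReal_prod_of_nonneg fun j _ => (exp_pos _).le, ← exp_sum,
      mul_sum, ← sum_neg_distrib, mul_assoc]
  calc Measure.pi (fun _ : ι => gaussianReal 0 v) {x | ∑ j, b j * x j ^ 2 ≤ 0}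
      ≤ Measure.pi (fun _ : ι => gaussianReal 0 v) {x | 1 ≤ ∏ j, f j (x j)} := by
        refine measure_mono fun x hx => ?_
        rw [Set.mem_ofPred_eq, ← hexp, ← ENNReal.ofReal_one]
        exact ENNReal.ofReal_le_ofReal
          (one_le_exp (neg_nonneg.2 (mul_nonpos_of_nonneg_of_nonpos ht hx)))
    _ ≤ ∫⁻ x, ∏ j, f j (x j) ∂Measure.pi (fun _ : ι => gaussianReal 0 v) := by
        simpa using mul_meas_ge_le_lintegral₀
          (measurable_prod _ fun j _ => (hf j).comp (measurable_pi_apply j)).aemeasurable 1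
    _ = ∏ j, ∫⁻ y, f j y ∂gaussianReal 0 v := by
        rw [lintegral_prod_eq_prod_lintegral_of_indepFun _ _
          (iIndepFun_pi fun j => (hf j).aemeasurable) fun j => (hf j).comp (measurable_pi_apply j)]
        exact prod_congr rfl fun j _ => (measurePreserving_eval _ j).lintegral_comp (hf j)
    _ = ∏ j, ENNReal.ofReal (√(1 + s * b j))⁻¹ := by
        refine prod_congr rfl fun j _ => ?_
        rw [← hscale]
        exact lintegral_exp_neg_mul_sq_gaussianReal hv (hscale j ▸ hb j)

theorem measure_pi_gaussianReal_sum_mul_sq_nonpos_le_exp {ι : Type*} [Fintype ι] {v : ℝ≥0}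
    (hv : v ≠ 0) (b : ι → ℝ) {s : ℝ} (hs : 0 ≤ s) (hb : ∀ j, |s * b j| ≤ 1 / 7) :
    Measure.pi (fun _ : ι => gaussianReal 0 v) {x | ∑ j, b j * x j ^ 2 ≤ 0} ≤
      ENNReal.ofReal (exp (-(s * ∑ j, b j - 2 / 3 * s ^ 2 * ∑ j, b j ^ 2) / 2)) := by
  have hpos : ∀ j, 0 < 1 + s * b j := fun j => by linarith [neg_abs_le (s * b j), hb j]
  refine (measure_pi_gaussianReal_sum_mul_sq_nonpos_le hv b hs hpos).trans ?_
  rw [← ENNReal.ofReal_prod_of_nonneg fun j _ => by positivity]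
  refine ENNReal.ofReal_le_ofReal ((prod_le_prod (fun j _ => by positivity)
    fun j _ => inv_sqrt_one_add_le_exp (hb j)).trans_eq ?_)
  rw [← exp_sum]
  congr 1
  rw [mul_sum, mul_sum, ← sum_sub_distrib, ← sum_neg_distrib, sum_div]
  exact sum_congr rfl fun j _ => by ring

theorem sum_sum_eq_sum_of_partition {ι κ M : Type*} [Fintype ι] [Fintype κ] [DecidableEq κ]
    [AddCommMonoid M] (A : κ → Finset ι) (hdisj : ∀ i j, i ≠ j → Disjoint (A i) (A j))
    (idx : ι → κ) (hidx : ∀ k, k ∈ A (idx k)) (f : κ → ι → M) :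
    ∑ i, ∑ j ∈ A i, f i j = ∑ j, f (idx j) j := by
  have hA : ∀ i, A i = univ.filter (idx · = i) := fun i => by
    ext j
    simp only [mem_filter, mem_univ, true_and]
    refine ⟨fun hj => ?_, fun hj => hj ▸ hidx j⟩
    by_contra hne
    exact disjoint_left.mp (hdisj _ _ hne) (hidx j) hj
  rw [← sum_fiberwise univ idx fun j => f (idx j) j]
  refine sum_congr rfl fun i _ => ?_
  rw [hA i]
  exact sum_congr rfl fun j hj => by rw [(mem_filter.mp hj).2]

theorem statement8_general {n p : ℕ} (hn : 0 < n) (Apart : Fin p → Finset (Fin n))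
    (hdisj : ∀ i j, i ≠ j → Disjoint (Apart i) (Apart j))
    (hcover : ∀ k : Fin n, ∃ i, k ∈ Apart i)
    (P : ℝ≥0) (hP : 0 < P)
    (a : Fin p → ℝ) (A : ℝ)
    (habar : 0 < ∑ i, ((Apart i).card : ℝ) / (n : ℝ) * a i)
    (hbound : ∀ i, |a i| ≤ A)
    (hsmall : ∑ i, ((Apart i).card : ℝ) / (n : ℝ) * a i ≤ A / 8) :
    Measure.pi (fun _ : Fin n => gaussianReal 0 P)
        {x : Fin n → ℝ | ∑ i, a i * (∑ j ∈ Apart i, (x j) ^ 2) ≤ 0} ≤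
      ENNReal.ofReal
        (Real.exp (-(n : ℝ) *
          ((∑ i, ((Apart i).card : ℝ) / (n : ℝ) * a i) ^ 2 / (6 * A ^ 2)))) := by
  set abar := ∑ i, ((Apart i).card : ℝ) / (n : ℝ) * a i
  choose idx hidx using hcover
  have hA : 0 < A := by linarith
  have hquad : ∀ x : Fin n → ℝ,
      ∑ i, a i * ∑ j ∈ Apart i, x j ^ 2 = ∑ j, a (idx j) * x j ^ 2 := fun x => by
    simp_rw [mul_sum]
    exact sum_sum_eq_sum_of_partition Apart hdisj idx hidx fun i j => a i * x j ^ 2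
  have hsum : ∑ j, a (idx j) = n * abar := by
    rw [← sum_sum_eq_sum_of_partition Apart hdisj idx hidx fun i _ => a i, mul_sum]
    refine sum_congr rfl fun i _ => ?_
    rw [sum_const, nsmul_eq_mul]
    field_simp
  have hsum_sq : ∑ j, a (idx j) ^ 2 ≤ n * A ^ 2 := by
    calc ∑ j, a (idx j) ^ 2 ≤ ∑ _j : Fin n, A ^ 2 :=
          sum_le_sum fun j _ => sq_le_sq' (abs_le.1 (hbound _)).1 (abs_le.1 (hbound _)).2
      _ = n * A ^ 2 := by simp
  clear_value abar
  obtain ⟨s, hs_def⟩ : ∃ s, s = abar / (2 * A ^ 2) := ⟨_, rfl⟩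
  have hs : 0 ≤ s := hs_def ▸ by positivity
  have hsa : ∀ j, |s * a (idx j)| ≤ 1 / 7 := fun j => by
    rw [abs_mul, abs_of_nonneg hs]
    calc s * |a (idx j)| ≤ s * A := by gcongr; exact hbound _
      _ = abar / (2 * A) := by rw [hs_def]; field_simp
      _ ≤ 1 / 7 := by rw [div_le_iff₀ (by positivity)]; linarith
  simp_rw [hquad]
  refine (measure_pi_gaussianReal_sum_mul_sq_nonpos_le_exp hP.ne' _ hs hsa).trans
    (ENNReal.ofReal_le_ofReal (exp_le_exp.2 ?_))
  calc -(s * ∑ j, a (idx j) - 2 / 3 * s ^ 2 * ∑ j, a (idx j) ^ 2) / 2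
      ≤ -(s * (n * abar) - 2 / 3 * s ^ 2 * (n * A ^ 2)) / 2 := by rw [hsum]; gcongr
    _ = -(n : ℝ) * (abar ^ 2 / (6 * A ^ 2)) := by rw [hs_def]; field_simp; ring

theorem statement8 {n p : ℕ} (hn : 0 < n) (Apart : Fin p → Finset (Fin n))
    (hne : ∀ i, (Apart i).Nonempty)
    (hdisj : ∀ i j, i ≠ j → Disjoint (Apart i) (Apart j))
    (hcover : ∀ k : Fin n, ∃ i, k ∈ Apart i)
    (P : ℝ≥0) (hP : 0 < P)
    (a : Fin p → ℝ) (A : ℝ)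
    (habar : 0 < ∑ i, ((Apart i).card : ℝ) / (n : ℝ) * a i)
    (hbound : ∀ i, |a i| ≤ A)
    (hsmall : ∑ i, ((Apart i).card : ℝ) / (n : ℝ) * a i ≤ A / 8) :
    Measure.pi (fun _ : Fin n => gaussianReal 0 P)
        {x : Fin n → ℝ | ∑ i, a i * (∑ j ∈ Apart i, (x j) ^ 2) ≤ 0} ≤
      ENNReal.ofReal
        (Real.exp (-(n : ℝ) *
          ((∑ i, ((Apart i).card : ℝ) / (n : ℝ) * a i) ^ 2 / (6 * A ^ 2)))) :=
  statement8_general hn Apart hdisj hcover P hP a A habar hbound hsmall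
end

section
/- For every ε ∈ [0, 1/2], the rate R = (1/2)·log₂( 1/(1 − (2/π)(1 − 2ε)²) ) and the binary symmetric channel capacity C = 1 − h_b(ε) (in bits) satisfy R ≥ (2/π)·C. -/
/-!
Put `x = 1 - 2ε` and `a = 2/π`. Since `2 log 2 · (1 - h_b ε) = (1+x) log(1+x) + (1-x) log(1-x)`,
the claim says that `rateGap a x = -log(1 - a x²) - a((1+x) log(1+x) + (1-x) log(1-x))` is
nonnegative on `[0, 1]`. It vanishes at `0` and its derivative is `2a (x / (1 - a x²) - artanh x)`.
The bracket `artanhGap a x` vanishes at `0` and its derivative has the sign of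
`(3a - 1) - a(1 + a) x²`, so it first increases and then decreases; as it is still nonnegative at
`x = 0.985`, it is nonnegative on `[0, 0.985]`, where `rateGap a` therefore increases.
On `[0.985, 1]` the crude bound `(1+x) log(1+x) + (1-x) log(1-x) ≤ 2 log 2` suffices.
-/

/-- The binary entropy function, in bits (with `h_b 0 = h_b 1 = 0` by the convention
`Real.logb 2 0 = 0`). -/
noncomputable def hb (p : ℝ) : ℝ := -p * Real.logb 2 p - (1 - p) * Real.logb 2 (1 - p)

open Real Set

section

variable {a b x : ℝ}

lemma one_sub_mul_sq_pos (ha : a ≤ 1) (hx₀ : -1 < x) (hx₁ : x < 1) : 0 < 1 - a * x ^ 2 := by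
  nlinarith

-- On `(-1, 1)`, `(log (1 + x) - log (1 - x)) / 2 = artanh x`.
noncomputable def artanhGap (a x : ℝ) : ℝ :=
  x / (1 - a * x ^ 2) - (log (1 + x) - log (1 - x)) / 2

lemma hasDerivAt_artanhGap (ha : a ≤ 1) (hx₀ : -1 < x) (hx₁ : x < 1) :
    HasDerivAt (artanhGap a)
      (x ^ 2 * (3 * a - 1 - a * (1 + a) * x ^ 2) / ((1 - a * x ^ 2) ^ 2 * (1 - x ^ 2))) x := by
  have hd := one_sub_mul_sq_pos ha hx₀ hx₁
  have hx : 0 < 1 - x ^ 2 := by nlinarith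
  have hq : HasDerivAt (fun x ↦ 1 - a * x ^ 2) (-(a * (2 * x))) x := by
    simpa using ((hasDerivAt_pow 2 x).const_mul a).const_sub 1
  have hp : HasDerivAt (fun x ↦ log (1 + x)) (1 / (1 + x)) x := by
    simpa using ((hasDerivAt_id x).const_add 1).log (by simp; linarith)
  have hm : HasDerivAt (fun x ↦ log (1 - x)) (-1 / (1 - x)) x := by
    simpa using ((hasDerivAt_id x).const_sub 1).log (by simp; linarith)
  refine (((hasDerivAt_id x).div hq hd.ne').sub ((hp.sub hm).div_const 2)).congr_deriv ?_
  simp only [id]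
  field_simp [show 1 + x ≠ 0 by linarith, show 1 - x ≠ 0 by linarith]
  ring

-- On `(-1, 1)`, `(log (1 + x) - log (1 - x)) / 2 = artanh x`.
noncomputable def artanhGapPeak (a : ℝ) : ℝ := √((3 * a - 1) / (a * (1 + a)))

lemma artanhGapPeak_lt_one (ha₀ : 0 < a) (ha₁ : a < 1) : artanhGapPeak a < 1 := by
  rw [artanhGapPeak, sqrt_lt' one_pos, one_pow, div_lt_one (by positivity)]
  nlinarith [sq_pos_of_ne_zero (sub_ne_zero.2 ha₁.ne)]

lemma artanhGap_monotoneOn (ha₀ : 0 < a) (ha₁ : a < 1) :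
    MonotoneOn (artanhGap a) (Icc 0 (artanhGapPeak a)) := by
  have hpeak := artanhGapPeak_lt_one ha₀ ha₁
  refine monotoneOn_of_deriv_nonneg (convex_Icc _ _)
    (fun y hy ↦ (hasDerivAt_artanhGap ha₁.le (by linarith [hy.1]) (by linarith [hy.2])
      ).continuousAt.continuousWithinAt) (fun y hy ↦ ?_) (fun y hy ↦ ?_)
  all_goals rw [interior_Icc] at hy; obtain ⟨hy₀, hy₁⟩ := hy
  · exact (hasDerivAt_artanhGap ha₁.le (by linarith) (by linarith)
      ).differentiableAt.differentiableWithinAt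
  · have : 0 < 1 - y ^ 2 := by nlinarith
    rw [(hasDerivAt_artanhGap ha₁.le (by linarith) (by linarith)).deriv]
    rw [artanhGapPeak, lt_sqrt hy₀.le, lt_div_iff₀ (by positivity)] at hy₁
    have : 0 ≤ 3 * a - 1 - a * (1 + a) * y ^ 2 := by linarith
    positivity

lemma artanhGap_antitoneOn (ha₀ : 0 < a) (ha₁ : a < 1) :
    AntitoneOn (artanhGap a) (Ico (artanhGapPeak a) 1) := by
  have hpeak : 0 ≤ artanhGapPeak a := sqrt_nonneg _
  refine antitoneOn_of_deriv_nonpos (convex_Ico _ _)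
    (fun y hy ↦ (hasDerivAt_artanhGap ha₁.le (by linarith [hy.1]) hy.2
      ).continuousAt.continuousWithinAt) (fun y hy ↦ ?_) (fun y hy ↦ ?_)
  all_goals
    rw [interior_Ico] at hy
    obtain ⟨hy₀, hy₁⟩ := hy
    have : 0 < y := hpeak.trans_lt hy₀
  · exact (hasDerivAt_artanhGap ha₁.le (by linarith) hy₁
      ).differentiableAt.differentiableWithinAt
  · rw [(hasDerivAt_artanhGap ha₁.le (by linarith) hy₁).deriv]
    have : 0 < 1 - y ^ 2 := by nlinarith
    rw [artanhGapPeak, sqrt_lt' (by linarith), div_lt_iff₀ (by positivity)] at hy₀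
    have : 3 * a - 1 - a * (1 + a) * y ^ 2 ≤ 0 := by linarith
    exact div_nonpos_of_nonpos_of_nonneg (mul_nonpos_of_nonneg_of_nonpos (sq_nonneg y) this)
      (by positivity)

lemma artanhGap_nonneg_of_le (ha₀ : 0 < a) (ha₁ : a < 1) (hb : b < 1)
    (hgap : 0 ≤ artanhGap a b) (hx : x ∈ Icc 0 b) : 0 ≤ artanhGap a x := by
  rcases le_total x (artanhGapPeak a) with h | h
  · have hpeak : 0 ≤ artanhGapPeak a := sqrt_nonneg _
    simpa [artanhGap] using
      artanhGap_monotoneOn ha₀ ha₁ ⟨le_rfl, hpeak⟩ ⟨hx.1, h⟩ hx.1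
  · exact hgap.trans <|
      artanhGap_antitoneOn ha₀ ha₁ ⟨h, hx.2.trans_lt hb⟩ ⟨h.trans hx.2, hb⟩ hx.2

noncomputable def rateGap (a x : ℝ) : ℝ :=
  -log (1 - a * x ^ 2) - a * ((1 + x) * log (1 + x) + (1 - x) * log (1 - x))

lemma hasDerivAt_rateGap (ha : a ≤ 1) (hx₀ : -1 < x) (hx₁ : x < 1) :
    HasDerivAt (rateGap a) (2 * a * artanhGap a x) x := by
  have hd := one_sub_mul_sq_pos ha hx₀ hx₁
  have hq : HasDerivAt (fun x ↦ 1 - a * x ^ 2) (-(a * (2 * x))) x := by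
    simpa using ((hasDerivAt_pow 2 x).const_mul a).const_sub 1
  have hp₁ : HasDerivAt (fun x ↦ 1 + x) 1 x := (hasDerivAt_id' x).const_add 1
  have hm₁ : HasDerivAt (fun x ↦ 1 - x) (-1) x := by simpa using (hasDerivAt_id' x).const_sub 1
  have hp := hp₁.mul (hp₁.log (by linarith))
  have hm := hm₁.mul (hm₁.log (by linarith))
  refine ((hq.log hd.ne').neg.sub ((hp.add hm).const_mul a)).congr_deriv ?_
  rw [artanhGap]
  field_simp [show 1 + x ≠ 0 by linarith, show 1 - x ≠ 0 by linarith]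
  ring

lemma rateGap_monotoneOn (ha₀ : 0 ≤ a) (ha₁ : a ≤ 1) (hb : b < 1)
    (hgap : ∀ y ∈ Icc 0 b, 0 ≤ artanhGap a y) : MonotoneOn (rateGap a) (Icc 0 b) := by
  refine monotoneOn_of_deriv_nonneg (convex_Icc _ _)
    (fun y hy ↦ (hasDerivAt_rateGap ha₁ (by linarith [hy.1]) (by linarith [hy.2])
      ).continuousAt.continuousWithinAt) (fun y hy ↦ ?_) (fun y hy ↦ ?_)
  all_goals rw [interior_Icc] at hy; obtain ⟨hy₀, hy₁⟩ := hy
  · exact (hasDerivAt_rateGap ha₁ (by linarith) (by linarith)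
      ).differentiableAt.differentiableWithinAt
  · rw [(hasDerivAt_rateGap ha₁ (by linarith) (by linarith)).deriv]
    have := hgap y ⟨hy₀.le, hy₁.le⟩
    positivity

lemma mul_log_le_mul_log {s t : ℝ} (ht : 0 ≤ t) (hts : t ≤ s) : t * log t ≤ t * log s := by
  rcases ht.eq_or_lt with rfl | ht
  · simp
  · exact mul_le_mul_of_nonneg_left (log_le_log ht hts) ht.le

lemma rateGap_ge (ha₀ : 0 ≤ a) (ha₁ : a < 1) (hb : 0 ≤ b) (hbx : b ≤ x) (hx : x ≤ 1) :
    -log (1 - a * b ^ 2) - 2 * a * log 2 ≤ rateGap a x := by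
  have hx₀ : 0 ≤ x := hb.trans hbx
  have hsq : b ^ 2 ≤ x ^ 2 := pow_le_pow_left₀ hb hbx 2
  have hlog : log (1 - a * x ^ 2) ≤ log (1 - a * b ^ 2) :=
    log_le_log (by nlinarith [mul_le_mul_of_nonneg_left (pow_le_one₀ (n := 2) hx₀ hx) ha₀])
      (by nlinarith)
  have hp := mul_log_le_mul_log (by linarith : 0 ≤ 1 + x) (by linarith : 1 + x ≤ 2)
  have hm := mul_log_le_mul_log (by linarith : 0 ≤ 1 - x) (by linarith : 1 - x ≤ 2)
  rw [rateGap]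
  nlinarith

end

lemma one_sub_two_div_pi_mul_sq_le : 1 - 2 / π * 0.985 ^ 2 ≤ 5 / 13 := by
  rw [sub_le_iff_le_add, ← sub_le_iff_le_add', div_mul_eq_mul_div, le_div_iff₀ pi_pos]
  nlinarith [pi_lt_d2]

lemma one_sub_two_div_pi_mul_sq_pos : 0 < 1 - 2 / π * 0.985 ^ 2 := by
  rw [sub_pos, div_mul_eq_mul_div, div_lt_one pi_pos]
  nlinarith [pi_gt_three]

lemma artanhGap_two_div_pi_nonneg : 0 ≤ artanhGap (2 / π) 0.985 := by
  have hlog : log (1 + 0.985) - log (1 - 0.985) ≤ 5 := by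
    rw [← log_div (by norm_num) (by norm_num), log_le_iff_le_exp (by norm_num),
      show (5 : ℝ) = (5 : ℕ) by norm_num, ← exp_one_pow]
    nlinarith [pow_le_pow_left₀ (by norm_num) exp_one_gt_d9.le 5]
  have hd := one_sub_two_div_pi_mul_sq_le
  rw [artanhGap, sub_nonneg, le_div_iff₀ one_sub_two_div_pi_mul_sq_pos]
  nlinarith [one_sub_two_div_pi_mul_sq_pos]

lemma two_mul_two_div_pi_mul_log_two_le :
    2 * (2 / π) * log 2 ≤ -log (1 - 2 / π * 0.985 ^ 2) := by
  have hd := one_sub_two_div_pi_mul_sq_pos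
  have h16 : log (16 * (1 - 2 / π * 0.985 ^ 2) ^ 3) ≤ 0 :=
    log_nonpos (by positivity) (by
      nlinarith [pow_le_pow_left₀ hd.le one_sub_two_div_pi_mul_sq_le 3])
  rw [log_mul (by norm_num) (by positivity), log_pow,
    show (16 : ℝ) = 2 ^ 4 by norm_num, log_pow] at h16
  have : 2 / π ≤ 2 / 3 := div_le_div_of_nonneg_left (by norm_num) (by norm_num) pi_gt_three.le
  nlinarith [log_pos one_lt_two]

lemma rateGap_two_div_pi_nonneg {x : ℝ} (hx : x ∈ Icc 0 1) : 0 ≤ rateGap (2 / π) x := by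
  have ha₀ : 0 < 2 / π := by positivity
  have ha₁ : 2 / π < 1 := by rw [div_lt_one pi_pos]; linarith [pi_gt_three]
  rcases le_total x 0.985 with h | h
  · have hgap (y : ℝ) (hy : y ∈ Icc 0 0.985) : 0 ≤ artanhGap (2 / π) y :=
      artanhGap_nonneg_of_le ha₀ ha₁ (by norm_num) artanhGap_two_div_pi_nonneg hy
    simpa [rateGap] using
      rateGap_monotoneOn ha₀.le ha₁.le (by norm_num) hgap ⟨le_rfl, by norm_num⟩ ⟨hx.1, h⟩
        hx.1
  · have := rateGap_ge ha₀.le ha₁ (by norm_num) h hx.2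
    linarith [two_mul_two_div_pi_mul_log_two_le]

lemma mul_log_div_two (t : ℝ) : t / 2 * log (t / 2) = (t * log t - t * log 2) / 2 := by
  rcases eq_or_ne t 0 with rfl | ht
  · simp
  · rw [log_div ht two_ne_zero]
    ring

lemma log_two_mul_one_sub_hb (x : ℝ) :
    2 * log 2 * (1 - hb ((1 - x) / 2)) = (1 + x) * log (1 + x) + (1 - x) * log (1 - x) := by
  have hm := mul_log_div_two (1 - x)
  have hp := mul_log_div_two (1 + x)
  rw [hb, show 1 - (1 - x) / 2 = (1 + x) / 2 by ring, logb, logb]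
  field_simp
  linear_combination 2 * hm + 2 * hp

theorem statement17 (ε : ℝ) (hε : ε ∈ Set.Icc (0 : ℝ) (1 / 2)) :
    (2 / Real.pi) * (1 - hb ε) ≤
      (1 / 2) * Real.logb 2 (1 / (1 - (2 / Real.pi) * (1 - 2 * ε) ^ 2)) := by
  obtain ⟨x, rfl⟩ : ∃ x, ε = (1 - x) / 2 := ⟨1 - 2 * ε, by ring⟩
  have hx : x ∈ Icc 0 1 := by obtain ⟨h₀, h₁⟩ := hε; constructor <;> linarith
  have hgap := rateGap_two_div_pi_nonneg hx
  have hhb := log_two_mul_one_sub_hb x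
  rw [rateGap, ← hhb] at hgap
  rw [show 1 - 2 * ((1 - x) / 2) = x by ring, logb, one_div (1 - _), log_inv, mul_div_assoc',
    le_div_iff₀ (log_pos one_lt_two)]
  linarith
end
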